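/- arXiv:1908.07449 — 5 statements merged into one kernel-verified Lean document; each statement's English description precedes it below -/
import Mathlib

section
/- Suppose Assumptions 1 and 2 hold. Then the nonlinear forward-backward map T_FB := (M + A)⁻¹ ∘ (M − C) has full domain and is single-valued: for every x ∈ H there exists a unique point x̂ ∈ H such that Mx − Cx − Mx̂ ∈ A x̂. Moreover, the resulting map x ↦ x̂ is Lipschitz continuous: there exists L' ≥ 0 such that ‖T_FB x − T_FB y‖ ≤ L'‖x − y‖ for all x, y ∈ H. -/
/-!
Uniqueness and the Lipschitz bound come from one estimate: if `q₁ - M a ∈ A a` and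
`q₂ - M b ∈ A b`, monotonicity of `A` and `c`-strong monotonicity of `M` give
`c ‖a - b‖ ≤ ‖q₁ - q₂‖`; and `M - C` is Lipschitz, since cocoercivity of `C` with respect to
`P⁻¹` makes `C` Lipschitz.

For existence, Minty's theorem (`I + γ A` is onto) makes the resolvent `J` of `γ A` an everywhere
defined nonexpansive map, and for `γ = c / L²` the map `w ↦ J (w - γ (M w - q))` is a contraction
whose fixed point solves `q - M w ∈ A w`. Minty's theorem is proved by minimising
`t + ‖x‖² / 2 + ‖u‖² / 2` over the epigraph of the Fitzpatrick function of `A`: the minimiser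
`(p, q)` satisfies `‖p + q‖² ≤ ⟪p + v, q + y⟫` whenever `v ∈ A y`, so maximality puts `-p ∈ A (-q)`,
and testing with this point forces `p + q = 0`.
-/

/-- The norm `‖x‖_P := √⟨x, Px⟩` induced by a bounded self-adjoint strongly positive
linear operator `P`. -/
noncomputable def pnorm {H : Type*} [NormedAddCommGroup H] [InnerProductSpace ℝ H]
    (P : H →L[ℝ] H) (x : H) : ℝ := Real.sqrt (inner ℝ x (P x))

/-- A set-valued operator (identified with its graph) is monotone. -/
def IsMonotoneOp {H : Type*} [NormedAddCommGroup H] [InnerProductSpace ℝ H]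
    (A : H → Set H) : Prop :=
  ∀ ⦃x u y v⦄, u ∈ A x → v ∈ A y → (0:ℝ) ≤ inner ℝ (u - v) (x - y)

/-- A set-valued operator is maximally monotone: it is monotone and its graph is not
properly contained in the graph of any monotone operator. -/
def IsMaxMonotoneOp {H : Type*} [NormedAddCommGroup H] [InnerProductSpace ℝ H]
    (A : H → Set H) : Prop :=
  IsMonotoneOp A ∧ ∀ x u, (∀ y v, v ∈ A y → (0:ℝ) ≤ inner ℝ (u - v) (x - y)) → u ∈ A x

open scoped RealInnerProductSpace Pointwise
open Filter Topology

theorem cauchySeq_of_norm_sub_sq_le {E : Type*} [SeminormedAddCommGroup E] {f : ℕ → E}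
    {ε : ℕ → ℝ} (hε : Tendsto ε atTop (𝓝 0)) (h : ∀ n m, ‖f n - f m‖ ^ 2 ≤ ε n + ε m) :
    CauchySeq f := by
  rw [Metric.cauchySeq_iff']
  intro δ hδ
  obtain ⟨N, hN⟩ := (hε.eventually (gt_mem_nhds (half_pos (pow_pos hδ 2)))).exists_forall_of_atTop
  refine ⟨N, fun n hn => ?_⟩
  rw [dist_eq_norm]
  refine lt_of_pow_lt_pow_left₀ 2 hδ.le ?_
  linarith [h n N, hN n hn, hN N le_rfl]

section MonotoneOperators

variable {H : Type*} [NormedAddCommGroup H] [InnerProductSpace ℝ H] {A : H → Set H}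

theorem mul_norm_le_of_mul_sq_le_inner {c : ℝ} {a u : H} (h : c * ‖a‖ ^ 2 ≤ ⟪u, a⟫) :
    c * ‖a‖ ≤ ‖u‖ := by
  rcases (norm_nonneg a).eq_or_lt with ha | ha
  · simp [← ha]
  · have : c * ‖a‖ * ‖a‖ ≤ ‖u‖ * ‖a‖ := by nlinarith [real_inner_le_norm u a]
    exact le_of_mul_le_mul_right this ha

theorem IsMonotoneOp.mul_norm_sub_le (hA : IsMonotoneOp A) {M : H → H} {c : ℝ}
    (hM : ∀ x y, c * ‖x - y‖ ^ 2 ≤ ⟪M x - M y, x - y⟫) {q₁ q₂ a b : H}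
    (ha : q₁ - M a ∈ A a) (hb : q₂ - M b ∈ A b) : c * ‖a - b‖ ≤ ‖q₁ - q₂‖ := by
  apply mul_norm_le_of_mul_sq_le_inner
  have := hA ha hb
  rw [show q₁ - M a - (q₂ - M b) = (q₁ - q₂) - (M a - M b) by abel, inner_sub_left] at this
  linarith [hM a b]

theorem IsMaxMonotoneOp.exists_mem (hA : IsMaxMonotoneOp A) : ∃ x u, u ∈ A x := by
  by_contra! h
  exact h 0 0 (hA.2 0 0 fun y v hv => absurd hv (h y v))

theorem IsMaxMonotoneOp.smul (hA : IsMaxMonotoneOp A) {γ : ℝ} (hγ : 0 < γ) :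
    IsMaxMonotoneOp fun x => γ • A x := by
  refine ⟨?_, fun x u hu => ?_⟩
  · rintro x _ y _ ⟨u, hu, rfl⟩ ⟨v, hv, rfl⟩
    rw [← smul_sub, real_inner_smul_left]
    exact mul_nonneg hγ.le (hA.1 hu hv)
  · rw [Set.mem_smul_set_iff_inv_smul_mem₀ hγ.ne']
    refine hA.2 _ _ fun y v hv => ?_
    rw [show γ⁻¹ • u - v = γ⁻¹ • (u - γ • v) by rw [smul_sub, inv_smul_smul₀ hγ.ne'],
      real_inner_smul_left]
    exact mul_nonneg (inv_nonneg.2 hγ.le) (hu y _ (Set.smul_mem_smul_set hv))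

theorem IsMaxMonotoneOp.preimage_add_const (hA : IsMaxMonotoneOp A) (z : H) :
    IsMaxMonotoneOp fun x => (· + z) ⁻¹' A x := by
  refine ⟨fun x u y v hu hv => ?_, fun x u hu => hA.2 x (u + z) fun y v hv => ?_⟩
  · simpa using hA.1 hu hv
  · rw [← sub_sub_eq_add_sub]
    exact hu y (v - z) (by simpa using hv)

/-- The Fitzpatrick function `(x, u) ↦ sup_{v ∈ A y} ⟪x, v⟫ + ⟪y, u⟫ - ⟪y, v⟫` of `A` is at most
`t` at `(x, u)`. Working with its epigraph avoids extended real values. -/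
def FitzpatrickLE (A : H → Set H) (x u : H) (t : ℝ) : Prop :=
  ∀ ⦃y v⦄, v ∈ A y → ⟪x, v⟫ + ⟪y, u⟫ - ⟪y, v⟫ ≤ t

noncomputable def fitzpatrickObjective (x u : H) (t : ℝ) : ℝ :=
  t + ‖x‖ ^ 2 / 2 + ‖u‖ ^ 2 / 2

theorem IsMonotoneOp.fitzpatrickLE_of_mem (hA : IsMonotoneOp A) {x u : H} (hu : u ∈ A x) :
    FitzpatrickLE A x u ⟪x, u⟫ := by
  intro y v hv
  have := hA hu hv
  rw [inner_sub_left, inner_sub_right, inner_sub_right, real_inner_comm x u, real_inner_comm y u,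
    real_inner_comm x v, real_inner_comm y v] at this
  linarith

theorem FitzpatrickLE.convex_comb {x x' u u' : H} {t t' a b : ℝ} (h : FitzpatrickLE A x u t)
    (h' : FitzpatrickLE A x' u' t') (ha : 0 ≤ a) (hb : 0 ≤ b) (hab : a + b = 1) :
    FitzpatrickLE A (a • x + b • x') (a • u + b • u') (a * t + b * t') := by
  intro y v hv
  have e : ⟪a • x + b • x', v⟫ + ⟪y, a • u + b • u'⟫ - ⟪y, v⟫ =
      a * (⟪x, v⟫ + ⟪y, u⟫ - ⟪y, v⟫) + b * (⟪x', v⟫ + ⟪y, u'⟫ - ⟪y, v⟫) := by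
    simp only [inner_add_left, inner_add_right, real_inner_smul_left, real_inner_smul_right]
    linear_combination ⟪y, v⟫ * hab
  rw [e]
  linarith [mul_le_mul_of_nonneg_left (h hv) ha, mul_le_mul_of_nonneg_left (h' hv) hb]

theorem FitzpatrickLE.of_tendsto {xs us : ℕ → H} {ts : ℕ → ℝ} {x u : H} {t : ℝ}
    (h : ∀ n, FitzpatrickLE A (xs n) (us n) (ts n)) (hx : Tendsto xs atTop (𝓝 x))
    (hu : Tendsto us atTop (𝓝 u)) (ht : Tendsto ts atTop (𝓝 t)) : FitzpatrickLE A x u t :=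
  fun _ _ hv => le_of_tendsto_of_tendsto'
    (((hx.inner tendsto_const_nhds).add (tendsto_const_nhds.inner hu)).sub tendsto_const_nhds)
    ht fun n => h n hv

theorem IsMaxMonotoneOp.inner_le_of_fitzpatrickLE (hA : IsMaxMonotoneOp A) {x u : H} {t : ℝ}
    (h : FitzpatrickLE A x u t) : ⟪x, u⟫ ≤ t := by
  by_contra! hlt
  have hu : u ∈ A x := hA.2 x u fun y v hv => by
    have := h hv
    rw [inner_sub_left, inner_sub_right, inner_sub_right, real_inner_comm x u,
      real_inner_comm y u, real_inner_comm x v, real_inner_comm y v]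
    linarith
  linarith [h hu]

theorem IsMaxMonotoneOp.fitzpatrickObjective_nonneg (hA : IsMaxMonotoneOp A) {x u : H} {t : ℝ}
    (h : FitzpatrickLE A x u t) : 0 ≤ fitzpatrickObjective x u t := by
  have := hA.inner_le_of_fitzpatrickLE h
  rw [fitzpatrickObjective]
  linarith [norm_add_sq_real x u, sq_nonneg ‖x + u‖]

theorem norm_smul_add_smul_sq {a b : ℝ} (hab : a + b = 1) (x y : H) :
    ‖a • x + b • y‖ ^ 2 = a * ‖x‖ ^ 2 + b * ‖y‖ ^ 2 - a * b * ‖x - y‖ ^ 2 := by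
  rw [norm_add_sq_real, norm_sub_sq_real, norm_smul, norm_smul, real_inner_smul_left,
    real_inner_smul_right, mul_pow, mul_pow, Real.norm_eq_abs, Real.norm_eq_abs, sq_abs, sq_abs]
  obtain rfl := eq_sub_of_add_eq hab
  ring

theorem fitzpatrickObjective_convex_comb {a b : ℝ} (hab : a + b = 1) (x x' u u' : H) (t t' : ℝ) :
    fitzpatrickObjective (a • x + b • x') (a • u + b • u') (a * t + b * t') =
      a * fitzpatrickObjective x u t + b * fitzpatrickObjective x' u' t' -
        a * b * (‖x - x'‖ ^ 2 + ‖u - u'‖ ^ 2) / 2 := by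
  simp only [fitzpatrickObjective, norm_smul_add_smul_sq hab]
  ring

theorem IsMaxMonotoneOp.exists_isMin_fitzpatrickObjective [CompleteSpace H]
    (hA : IsMaxMonotoneOp A) :
    ∃ p q s, FitzpatrickLE A p q s ∧ ∀ x u t, FitzpatrickLE A x u t →
      fitzpatrickObjective p q s ≤ fitzpatrickObjective x u t := by
  set V := {r | ∃ x u t, FitzpatrickLE A x u t ∧ fitzpatrickObjective x u t = r}
  have hVbdd : BddBelow V := ⟨0, by
    rintro _ ⟨x, u, t, h, rfl⟩
    exact hA.fitzpatrickObjective_nonneg h⟩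
  have hmin : ∀ x u t, FitzpatrickLE A x u t → sInf V ≤ fitzpatrickObjective x u t :=
    fun x u t h => csInf_le hVbdd ⟨x, u, t, h, rfl⟩
  obtain ⟨y, v, hv⟩ := hA.exists_mem
  obtain ⟨r, -, hr, hrV⟩ :=
    exists_seq_tendsto_sInf (show V.Nonempty from ⟨_, y, v, _, hA.1.fitzpatrickLE_of_mem hv, rfl⟩)
      hVbdd
  choose xs us ts hfeas hobj using hrV
  -- strong convexity of the objective bounds the spread of the minimizing sequence
  have hspread : ∀ n m, ‖xs n - xs m‖ ^ 2 + ‖us n - us m‖ ^ 2 ≤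
      4 * (r n - sInf V) + 4 * (r m - sInf V) := by
    intro n m
    have := hmin _ _ _ ((hfeas n).convex_comb (hfeas m) (a := 1 / 2) (b := 1 / 2)
      (by norm_num) (by norm_num) (by norm_num))
    rw [fitzpatrickObjective_convex_comb (by norm_num), hobj n, hobj m] at this
    linarith
  have hε : Tendsto (fun n => 4 * (r n - sInf V)) atTop (𝓝 0) := by
    simpa using (hr.sub_const (sInf V)).const_mul 4
  obtain ⟨p, hp⟩ := cauchySeq_tendsto_of_complete <|
    cauchySeq_of_norm_sub_sq_le (f := xs) hε fun n m => by
      linarith [hspread n m, sq_nonneg ‖us n - us m‖]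
  obtain ⟨q, hq⟩ := cauchySeq_tendsto_of_complete <|
    cauchySeq_of_norm_sub_sq_le (f := us) hε fun n m => by
      linarith [hspread n m, sq_nonneg ‖xs n - xs m‖]
  have hts : Tendsto ts atTop (𝓝 (sInf V - ‖p‖ ^ 2 / 2 - ‖q‖ ^ 2 / 2)) := by
    refine ((hr.sub ((hp.norm.pow 2).div_const 2)).sub ((hq.norm.pow 2).div_const 2)).congr
      fun n => ?_
    rw [← hobj n, fitzpatrickObjective]
    ring
  refine ⟨p, q, _, FitzpatrickLE.of_tendsto hfeas hp hq hts, fun x u t h => ?_⟩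
  calc fitzpatrickObjective p q (sInf V - ‖p‖ ^ 2 / 2 - ‖q‖ ^ 2 / 2) = sInf V := by
        rw [fitzpatrickObjective]; ring
    _ ≤ _ := hmin x u t h

theorem IsMonotoneOp.half_sq_dist_le_of_isMin (hA : IsMonotoneOp A) {p q : H} {s : ℝ}
    (hs : FitzpatrickLE A p q s) (hmin : ∀ x u t, FitzpatrickLE A x u t →
      fitzpatrickObjective p q s ≤ fitzpatrickObjective x u t) {y v : H} (hv : v ∈ A y) :
    (‖p - y‖ ^ 2 + ‖q - v‖ ^ 2) / 2 ≤
      fitzpatrickObjective y v ⟪y, v⟫ - fitzpatrickObjective p q s := by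
  set K := (‖p - y‖ ^ 2 + ‖q - v‖ ^ 2) / 2
  -- compare with the points of the segment towards `(y, v, ⟪y, v⟫)`, then let `θ → 0`
  have hseg : ∀ θ ∈ Set.Ioo (0 : ℝ) 1,
      (1 - θ) * K ≤ fitzpatrickObjective y v ⟪y, v⟫ - fitzpatrickObjective p q s := by
    rintro θ ⟨hθ0, hθ1⟩
    have := hmin _ _ _ (hs.convex_comb (hA.fitzpatrickLE_of_mem hv) (a := 1 - θ) (b := θ)
      (by linarith) hθ0.le (by ring))
    rw [fitzpatrickObjective_convex_comb (by ring)] at this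
    refine le_of_mul_le_mul_left ?_ hθ0
    simp only [K]
    linarith
  have hlim : Tendsto (fun θ : ℝ => (1 - θ) * K) (𝓝[>] 0) (𝓝 K) := by
    have : Continuous fun θ : ℝ => (1 - θ) * K := by fun_prop
    simpa using (this.tendsto 0).mono_left nhdsWithin_le_nhds
  exact le_of_tendsto hlim (eventually_of_mem (Ioo_mem_nhdsGT one_pos) hseg)

theorem IsMaxMonotoneOp.exists_neg_mem [CompleteSpace H] (hA : IsMaxMonotoneOp A) :
    ∃ x, -x ∈ A x := by
  obtain ⟨p, q, s, hs, hmin⟩ := hA.exists_isMin_fitzpatrickObjective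
  have hpq := hA.inner_le_of_fitzpatrickLE hs
  have key : ∀ y v, v ∈ A y → ‖p + q‖ ^ 2 ≤ ⟪p + v, q + y⟫ := by
    intro y v hv
    have := hA.1.half_sq_dist_le_of_isMin hs hmin hv
    rw [fitzpatrickObjective, fitzpatrickObjective, norm_sub_sq_real, norm_sub_sq_real] at this
    rw [norm_add_sq_real, inner_add_left, inner_add_right, inner_add_right, real_inner_comm q v,
      real_inner_comm y v]
    linarith
  have hmem : -p ∈ A (-q) := hA.2 _ _ fun y v hv => by
    rw [← neg_add', ← neg_add', inner_neg_neg]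
    exact (sq_nonneg _).trans (key y v hv)
  have hpq0 : p + q = 0 := by
    have := key _ _ hmem
    rw [add_neg_cancel, inner_zero_left] at this
    exact norm_eq_zero.1 (pow_eq_zero_iff two_ne_zero |>.1 (le_antisymm this (sq_nonneg _)))
  refine ⟨p, ?_⟩
  rwa [neg_eq_of_add_eq_zero_left hpq0] at hmem

theorem IsMaxMonotoneOp.exists_sub_mem_smul [CompleteSpace H] (hA : IsMaxMonotoneOp A) {γ : ℝ}
    (hγ : 0 < γ) (z : H) : ∃ x, z - x ∈ γ • A x := by
  obtain ⟨x, hx⟩ := ((hA.smul hγ).preimage_add_const z).exists_neg_mem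
  exact ⟨x, by rwa [sub_eq_neg_add]⟩

end MonotoneOperators

section ForwardBackward

variable {H : Type*} [NormedAddCommGroup H] [InnerProductSpace ℝ H] {A : H → Set H}
  {M : H → H} {c L : ℝ}

theorem norm_sub_sub_smul_sq_le (hM : ∀ x y, c * ‖x - y‖ ^ 2 ≤ ⟪M x - M y, x - y⟫)
    (hML : ∀ x y, ‖M x - M y‖ ≤ L * ‖x - y‖) {γ : ℝ} (hγ : 0 ≤ γ) (a b : H) :
    ‖(a - b) - γ • (M a - M b)‖ ^ 2 ≤ (1 - 2 * γ * c + γ ^ 2 * L ^ 2) * ‖a - b‖ ^ 2 := by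
  have hsq : ‖M a - M b‖ ^ 2 ≤ L ^ 2 * ‖a - b‖ ^ 2 := by
    rw [← mul_pow]
    exact pow_le_pow_left₀ (norm_nonneg _) (hML a b) 2
  rw [norm_sub_sq_real (a - b), real_inner_smul_right, norm_smul, mul_pow, Real.norm_eq_abs,
    sq_abs, real_inner_comm]
  nlinarith [mul_le_mul_of_nonneg_left (hM a b) hγ, mul_le_mul_of_nonneg_left hsq (sq_nonneg γ)]

theorem IsMaxMonotoneOp.exists_sub_mem_of_strongly_monotone [CompleteSpace H]
    (hA : IsMaxMonotoneOp A) (hc : 0 < c) (hL : 0 < L)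
    (hM : ∀ x y, c * ‖x - y‖ ^ 2 ≤ ⟪M x - M y, x - y⟫)
    (hML : ∀ x y, ‖M x - M y‖ ≤ L * ‖x - y‖) (q : H) : ∃ w, q - M w ∈ A w := by
  set γ := c / L ^ 2
  have hγ : 0 < γ := by positivity
  choose J hJ using hA.exists_sub_mem_smul hγ
  have hJ_lip : ∀ z w, ‖J z - J w‖ ≤ ‖z - w‖ := fun z w => by
    simpa using (hA.smul hγ).1.mul_norm_sub_le (M := id) (c := 1)
      (fun x y => by simp) (hJ z) (hJ w)
  set κ := √(1 - (c / L) ^ 2)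
  have hκ : κ < 1 := by
    rw [Real.sqrt_lt' one_pos]
    nlinarith [pow_pos (div_pos hc hL) 2]
  -- a forward step on `M - q` followed by a backward step through the resolvent of `γ • A`
  let Φ : H → H := fun w => J (w - γ • (M w - q))
  have hΦ : ContractingWith ⟨κ, Real.sqrt_nonneg _⟩ Φ := by
    refine ⟨hκ, LipschitzWith.of_dist_le_mul fun a b => ?_⟩
    rw [dist_eq_norm, dist_eq_norm]
    change ‖Φ a - Φ b‖ ≤ κ * ‖a - b‖
    calc ‖Φ a - Φ b‖ ≤ ‖(a - b) - γ • (M a - M b)‖ := by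
          refine (hJ_lip _ _).trans_eq (congrArg _ ?_)
          simp only [smul_sub]
          abel
      _ ≤ √((1 - (c / L) ^ 2) * ‖a - b‖ ^ 2) := by
          refine Real.le_sqrt_of_sq_le ((norm_sub_sub_smul_sq_le hM hML hγ.le a b).trans_eq ?_)
          simp only [γ]
          field_simp
          ring
      _ = κ * ‖a - b‖ := by rw [Real.sqrt_mul' _ (sq_nonneg _), Real.sqrt_sq (norm_nonneg _)]
  set w := ContractingWith.fixedPoint Φ hΦ
  have hw : J (w - γ • (M w - q)) = w := hΦ.fixedPoint_isFixedPt
  refine ⟨w, ?_⟩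
  have := hJ (w - γ • (M w - q))
  rwa [hw, show w - γ • (M w - q) - w = γ • (q - M w) by simp only [smul_sub]; abel,
    Set.smul_mem_smul_set_iff₀ hγ.ne'] at this

end ForwardBackward

section PositiveOperator

variable {H : Type*} [NormedAddCommGroup H] [InnerProductSpace ℝ H] {P Pinv : H →L[ℝ] H} {c : ℝ}

theorem mul_sq_norm_le_sq_pnorm (hc : 0 ≤ c) (hP : ∀ x : H, c * ‖x‖ ^ 2 ≤ ⟪x, P x⟫) (x : H) :
    c * ‖x‖ ^ 2 ≤ pnorm P x ^ 2 := by
  rw [pnorm, Real.sq_sqrt ((by positivity : 0 ≤ c * ‖x‖ ^ 2).trans (hP x))]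
  exact hP x

theorem mul_sq_norm_le_sq_pnorm_inverse (hc : 0 ≤ c) (hP : ∀ x : H, c * ‖x‖ ^ 2 ≤ ⟪x, P x⟫)
    (hPinv : P.comp Pinv = ContinuousLinearMap.id ℝ H) (w : H) :
    c * ‖w‖ ^ 2 ≤ ‖P‖ ^ 2 * pnorm Pinv w ^ 2 := by
  have hw : P (Pinv w) = w := by simpa using congr($hPinv w)
  have hlow : c * ‖Pinv w‖ ^ 2 ≤ ⟪w, Pinv w⟫ := by
    have := hP (Pinv w)
    rwa [hw, real_inner_comm] at this
  have hnorm : ‖w‖ ≤ ‖P‖ * ‖Pinv w‖ := (congrArg norm hw).symm.trans_le (P.le_opNorm _)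
  rw [pnorm, Real.sq_sqrt ((by positivity : 0 ≤ c * ‖Pinv w‖ ^ 2).trans hlow)]
  calc c * ‖w‖ ^ 2 ≤ c * (‖P‖ * ‖Pinv w‖) ^ 2 := by gcongr
    _ = ‖P‖ ^ 2 * (c * ‖Pinv w‖ ^ 2) := by ring
    _ ≤ ‖P‖ ^ 2 * ⟪w, Pinv w⟫ := by gcongr

theorem norm_sub_le_of_cocoercive {C : H → H} {β : ℝ} (hc : 0 < c)
    (hP : ∀ x : H, c * ‖x‖ ^ 2 ≤ ⟪x, P x⟫) (hPinv : P.comp Pinv = ContinuousLinearMap.id ℝ H)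
    (hβ : 0 ≤ β) (hC0 : β = 0 → ∀ x y : H, C x = C y)
    (hCpos : 0 < β → ∀ x y : H, (1 / β) * pnorm Pinv (C x - C y) ^ 2 ≤ ⟪C x - C y, x - y⟫)
    (x y : H) : ‖C x - C y‖ ≤ β * ‖P‖ ^ 2 / c * ‖x - y‖ := by
  rcases hβ.eq_or_lt with rfl | hβ
  · simp [hC0 rfl x y]
  have key : c * ‖C x - C y‖ ^ 2 ≤ ⟪(β * ‖P‖ ^ 2) • (x - y), C x - C y⟫ := by
    have h := hCpos hβ x y
    rw [one_div, inv_mul_le_iff₀ hβ] at h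
    rw [real_inner_smul_left, real_inner_comm]
    calc c * ‖C x - C y‖ ^ 2 ≤ ‖P‖ ^ 2 * pnorm Pinv (C x - C y) ^ 2 :=
          mul_sq_norm_le_sq_pnorm_inverse hc.le hP hPinv _
      _ ≤ ‖P‖ ^ 2 * (β * ⟪C x - C y, x - y⟫) := by gcongr
      _ = _ := by ring
  have := mul_norm_le_of_mul_sq_le_inner key
  rw [norm_smul, Real.norm_of_nonneg (by positivity)] at this
  rw [div_mul_eq_mul_div, le_div_iff₀ hc]
  linarith

end PositiveOperator

theorem nonlinear_fb_map_well_defined_and_lipschitz_general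
    {H : Type*} [NormedAddCommGroup H] [InnerProductSpace ℝ H] [CompleteSpace H]
    (P Pinv : H →L[ℝ] H)
    (hPpos : ∃ c > 0, ∀ x : H, c * ‖x‖ ^ 2 ≤ inner ℝ x (P x))
    (hPinv₁ : P.comp Pinv = ContinuousLinearMap.id ℝ H)
    -- Assumption 1
    (A : H → Set H) (hA : IsMaxMonotoneOp A)
    (β : ℝ) (hβ0 : 0 ≤ β)
    (C : H → H)
    (hC0 : β = 0 → ∀ x y : H, C x = C y)
    (hCpos : 0 < β → ∀ x y : H,
      (1 / β) * pnorm Pinv (C x - C y) ^ 2 ≤ inner ℝ (C x - C y) (x - y))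
    -- Assumption 2
    (M : H → H) (L_M : ℝ)
    (hMsm : ∀ x y : H, pnorm P (x - y) ^ 2 ≤ inner ℝ (M x - M y) (x - y))
    (hMlip : ∀ x y : H, ‖M x - M y‖ ≤ L_M * ‖x - y‖) :
    (∀ x : H, ∃! xhat : H, M x - C x - M xhat ∈ A xhat) ∧
    (∃ L' : ℝ, 0 ≤ L' ∧ ∀ x y xhat yhat : H,
        M x - C x - M xhat ∈ A xhat → M y - C y - M yhat ∈ A yhat →
        ‖xhat - yhat‖ ≤ L' * ‖x - y‖) := by
  obtain ⟨c, hc, hP⟩ := hPpos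
  have hM : ∀ x y, c * ‖x - y‖ ^ 2 ≤ ⟪M x - M y, x - y⟫ :=
    fun x y => (mul_sq_norm_le_sq_pnorm hc.le hP _).trans (hMsm x y)
  have hML : ∀ x y, ‖M x - M y‖ ≤ max L_M 1 * ‖x - y‖ :=
    fun x y => (hMlip x y).trans (by gcongr; exact le_max_left _ _)
  have hCL := norm_sub_le_of_cocoercive hc hP hPinv₁ hβ0 hC0 hCpos
  refine ⟨fun x => ?_, (max L_M 1 + β * ‖P‖ ^ 2 / c) / c, by positivity,
    fun x y xhat yhat hx hy => ?_⟩
  · obtain ⟨xhat, hxhat⟩ :=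
      hA.exists_sub_mem_of_strongly_monotone hc (by positivity) hM hML (M x - C x)
    refine ⟨xhat, hxhat, fun yhat hyhat => ?_⟩
    have := hA.1.mul_norm_sub_le hM hyhat hxhat
    rw [sub_self, norm_zero] at this
    exact sub_eq_zero.1 (norm_le_zero_iff.1 (nonpos_of_mul_nonpos_right this hc))
  · rw [div_mul_eq_mul_div, le_div_iff₀ hc]
    calc ‖xhat - yhat‖ * c ≤ ‖(M x - C x) - (M y - C y)‖ := by
          rw [mul_comm]
          exact hA.1.mul_norm_sub_le hM hx hy
      _ = ‖(M x - M y) - (C x - C y)‖ := by congr 1; abel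
      _ ≤ max L_M 1 * ‖x - y‖ + β * ‖P‖ ^ 2 / c * ‖x - y‖ :=
          (norm_sub_le _ _).trans (add_le_add (hML x y) (hCL x y))
      _ = _ := by ring

/-- under Assumptions 1 and 2 the nonlinear forward-backward map
`T_FB = (M + A)⁻¹ ∘ (M − C)` has full domain, is single-valued, and the resulting map
is Lipschitz continuous. -/
theorem nonlinear_fb_map_well_defined_and_lipschitz
    {H : Type*} [NormedAddCommGroup H] [InnerProductSpace ℝ H] [CompleteSpace H]
    (P Pinv : H →L[ℝ] H)
    (hPsa : IsSelfAdjoint P)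
    (hPpos : ∃ c > 0, ∀ x : H, c * ‖x‖ ^ 2 ≤ inner ℝ x (P x))
    (hPinv₁ : P.comp Pinv = ContinuousLinearMap.id ℝ H)
    (hPinv₂ : Pinv.comp P = ContinuousLinearMap.id ℝ H)
    -- Assumption 1
    (A : H → Set H) (hA : IsMaxMonotoneOp A)
    (β : ℝ) (hβ0 : 0 ≤ β) (hβ4 : β < 4)
    (C : H → H)
    (hC0 : β = 0 → ∀ x y : H, C x = C y)
    (hCpos : 0 < β → ∀ x y : H,
      (1 / β) * pnorm Pinv (C x - C y) ^ 2 ≤ inner ℝ (C x - C y) (x - y))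
    (hzer : ∃ x : H, -C x ∈ A x)
    -- Assumption 2
    (M : H → H) (L_M : ℝ)
    (hMsm : ∀ x y : H, pnorm P (x - y) ^ 2 ≤ inner ℝ (M x - M y) (x - y))
    (hMlip : ∀ x y : H, ‖M x - M y‖ ≤ L_M * ‖x - y‖) :
    (∀ x : H, ∃! xhat : H, M x - C x - M xhat ∈ A xhat) ∧
    (∃ L' : ℝ, 0 ≤ L' ∧ ∀ x y xhat yhat : H,
        M x - C x - M xhat ∈ A xhat → M y - C y - M yhat ∈ A yhat →
        ‖xhat - yhat‖ ≤ L' * ‖x - y‖) :=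
  nonlinear_fb_map_well_defined_and_lipschitz_general P Pinv hPpos hPinv₁ A hA β hβ0 C hC0 hCpos M
    L_M hMsm hMlip
end

section
/- Suppose Assumptions 1 and 2 hold, let T_FB be the nonlinear forward-backward map (T_FB x is the unique x̂ with Mx − Cx − Mx̂ ∈ A x̂), and for x ∈ H define the affine function ψ_x(z) := ⟨Mx − M(T_FB x), z − T_FB x⟩ − (β/4)‖x − T_FB x‖_P². Then: (i) ψ_x(x) ≥ (1 − β/4)‖x − T_FB x‖_P² ≥ 0 for all x ∈ H; (ii) ψ_x(x) = 0 if and only if −Cx ∈ Ax; (iii) ψ_x(z) ≤ 0 for every z ∈ zer(A + C) and every x ∈ H. -/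
/-!
Part (i) is strong monotonicity of `M` at `x` and `T x`, and since `‖·‖_P` is definite,
`ψ x x` vanishes exactly at the fixed points of `T`, which are the zeros of `A + C`.
For (iii), monotonicity of `A` at the pairs `(T x, M x - C x - M (T x))` and `(z, -C z)` gives
`ψ x z ≤ ⟨C x - C z, z - T x⟫ - (β/4)‖x - T x‖_P²`; splitting `z - T x = (x - T x) - (x - z)`,
Young's inequality in the dual pair `‖·‖_{P⁻¹}`, `‖·‖_P` bounds `⟨C x - C z, x - T x⟫` by
`(1/β)‖C x - C z‖_{P⁻¹}² + (β/4)‖x - T x‖_P²`, and cocoercivity absorbs the first term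
into `⟨C x - C z, x - z⟫`.
-/

open scoped RealInnerProductSpace

section PNorm

variable {H : Type*} [NormedAddCommGroup H] [InnerProductSpace ℝ H] {P : H →L[ℝ] H}

lemma pnorm_sq (hP : ∀ x, 0 ≤ ⟪x, P x⟫) (x : H) : pnorm P x ^ 2 = ⟪x, P x⟫ :=
  Real.sq_sqrt (hP x)

lemma inner_apply_self_nonneg (hP : ∃ c > 0, ∀ x : H, c * ‖x‖ ^ 2 ≤ ⟪x, P x⟫) (x : H) :
    0 ≤ ⟪x, P x⟫ := by
  obtain ⟨c, hc, hcP⟩ := hP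
  exact (by positivity : 0 ≤ c * ‖x‖ ^ 2).trans (hcP x)

lemma eq_zero_of_pnorm_eq_zero (hP : ∃ c > 0, ∀ x : H, c * ‖x‖ ^ 2 ≤ ⟪x, P x⟫) {x : H}
    (hx : pnorm P x = 0) : x = 0 := by
  obtain ⟨c, hc, hcP⟩ := hP
  have hle : c * ‖x‖ ^ 2 ≤ 0 := (hcP x).trans (Real.sqrt_eq_zero'.mp hx)
  have : ‖x‖ ^ 2 = 0 := le_antisymm (nonpos_of_mul_nonpos_right hle hc) (sq_nonneg _)
  simpa using this

/-- Young's inequality for the dual norms `‖·‖_{P⁻¹}` and `‖·‖_P`: expand `0 ≤ ⟪v, P v⟫` at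
`v = P⁻¹ u - (t / 2) • w`. -/
lemma mul_inner_le_pnorm_inv_sq_add [CompleteSpace H] (hPsa : IsSelfAdjoint P)
    (hP : ∀ x, 0 ≤ ⟪x, P x⟫)
    {Pinv : H →L[ℝ] H} (hPinv : P.comp Pinv = ContinuousLinearMap.id ℝ H) (t : ℝ) (u w : H) :
    t * ⟪u, w⟫ ≤ pnorm Pinv u ^ 2 + t ^ 2 / 4 * pnorm P w ^ 2 := by
  have hPPinv (v : H) : P (Pinv v) = v := by simpa using congr($hPinv v)
  have hsym : ∀ v v' : H, ⟪P v, v'⟫ = ⟪v, P v'⟫ :=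
    ContinuousLinearMap.isSelfAdjoint_iff_isSymmetric.mp hPsa
  have hPinv_nonneg (v : H) : 0 ≤ ⟪v, Pinv v⟫ := by
    simpa [hPPinv, real_inner_comm] using hP (Pinv v)
  rw [pnorm_sq hPinv_nonneg, pnorm_sq hP]
  have hsq := hP (Pinv u - (t / 2) • w)
  simp only [map_sub, map_smul, hPPinv, inner_sub_left, inner_sub_right, real_inner_smul_left,
    real_inner_smul_right, ← hsym, real_inner_comm u] at hsq
  nlinarith [real_inner_comm w (P w)]

lemma inner_sub_le_of_cocoercive [CompleteSpace H] (hPsa : IsSelfAdjoint P) (hP : ∀ x, 0 ≤ ⟪x, P x⟫)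
    {Pinv : H →L[ℝ] H} (hPinv : P.comp Pinv = ContinuousLinearMap.id ℝ H)
    {β : ℝ} (hβ0 : 0 ≤ β) {C : H → H} (hC0 : β = 0 → ∀ x y : H, C x = C y)
    (hCpos : 0 < β → ∀ x y : H, (1 / β) * pnorm Pinv (C x - C y) ^ 2 ≤ ⟪C x - C y, x - y⟫)
    (x y z : H) :
    ⟪C x - C z, z - y⟫ ≤ β / 4 * pnorm P (x - y) ^ 2 := by
  rcases hβ0.eq_or_lt with hβ | hβ
  · simp [hC0 hβ.symm x z, ← hβ]
  have hcoco : pnorm Pinv (C x - C z) ^ 2 ≤ β * ⟪C x - C z, x - z⟫ := by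
    have := hCpos hβ x z
    rwa [one_div, inv_mul_le_iff₀ hβ] at this
  have hyoung := mul_inner_le_pnorm_inv_sq_add hPsa hP hPinv β (C x - C z) (x - y)
  have hsplit : z - y = (x - y) - (x - z) := by abel
  rw [hsplit, inner_sub_right]
  refine le_of_mul_le_mul_left ?_ hβ
  nlinarith

end PNorm

lemma apply_eq_self_iff_neg_mem {H : Type*} [AddCommGroup H] {A : H → Set H} {C M T : H → H}
    (hT : ∀ x, M x - C x - M (T x) ∈ A (T x))
    (hTuniq : ∀ x xhat, M x - C x - M xhat ∈ A xhat → xhat = T x) (x : H) :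
    T x = x ↔ -C x ∈ A x := by
  have hrw : M x - C x - M x = -C x := by abel
  constructor
  · intro hx
    simpa [hx, hrw] using hT x
  · intro hx
    exact (hTuniq x x (hrw ▸ hx)).symm

lemma inner_le_of_mem_forwardBackward {H : Type*} [NormedAddCommGroup H] [InnerProductSpace ℝ H]
    {A : H → Set H} {C M : H → H} (hA : IsMonotoneOp A) {x y z : H}
    (hy : M x - C x - M y ∈ A y) (hz : -C z ∈ A z) :
    ⟪M x - M y, z - y⟫ ≤ ⟪C x - C z, z - y⟫ := by
  have hmono := hA hy hz
  have hrw : M x - C x - M y - -C z = (M x - M y) - (C x - C z) := by abel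
  rw [hrw, inner_sub_left, ← neg_sub z y, inner_neg_right, inner_neg_right] at hmono
  linarith

theorem separating_hyperplane_properties_general
    {H : Type*} [NormedAddCommGroup H] [InnerProductSpace ℝ H] [CompleteSpace H]
    (P Pinv : H →L[ℝ] H)
    (hPsa : IsSelfAdjoint P)
    (hPpos : ∃ c > 0, ∀ x : H, c * ‖x‖ ^ 2 ≤ inner ℝ x (P x))
    (hPinv₁ : P.comp Pinv = ContinuousLinearMap.id ℝ H)
    -- Assumption 1
    (A : H → Set H) (hA : IsMaxMonotoneOp A)
    (β : ℝ) (hβ0 : 0 ≤ β) (hβ4 : β < 4)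
    (C : H → H)
    (hC0 : β = 0 → ∀ x y : H, C x = C y)
    (hCpos : 0 < β → ∀ x y : H,
      (1 / β) * pnorm Pinv (C x - C y) ^ 2 ≤ inner ℝ (C x - C y) (x - y))
    -- Assumption 2
    (M : H → H)
    (hMsm : ∀ x y : H, pnorm P (x - y) ^ 2 ≤ inner ℝ (M x - M y) (x - y))
    -- T_FB
    (T : H → H)
    (hT : ∀ x : H, M x - C x - M (T x) ∈ A (T x))
    (hTuniq : ∀ x xhat : H, M x - C x - M xhat ∈ A xhat → xhat = T x)
    -- the affine separating function
    (ψ : H → H → ℝ)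
    (hψ : ∀ x z : H, ψ x z =
      inner ℝ (M x - M (T x)) (z - T x) - β / 4 * pnorm P (x - T x) ^ 2) :
    (∀ x : H, (1 - β / 4) * pnorm P (x - T x) ^ 2 ≤ ψ x x ∧ 0 ≤ ψ x x) ∧
    (∀ x : H, ψ x x = 0 ↔ -C x ∈ A x) ∧
    (∀ x z : H, -C z ∈ A z → ψ x z ≤ 0) := by
  have hlower (x : H) : (1 - β / 4) * pnorm P (x - T x) ^ 2 ≤ ψ x x := by
    rw [hψ]
    linarith [hMsm x (T x)]
  have hlower_nonneg (x : H) : 0 ≤ (1 - β / 4) * pnorm P (x - T x) ^ 2 :=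
    mul_nonneg (by linarith) (sq_nonneg _)
  refine ⟨fun x => ⟨hlower x, (hlower_nonneg x).trans (hlower x)⟩, fun x => ?_, fun x z hz => ?_⟩
  · rw [← apply_eq_self_iff_neg_mem hT hTuniq]
    constructor
    · intro hx
      have hsq : pnorm P (x - T x) ^ 2 = 0 := by nlinarith [hlower x, hlower_nonneg x]
      have hfix : x - T x = 0 :=
        eq_zero_of_pnorm_eq_zero hPpos (pow_eq_zero_iff two_ne_zero |>.mp hsq)
      exact (sub_eq_zero.mp hfix).symm
    · intro hx
      simp [hψ, hx, pnorm]
  · rw [hψ]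
    linarith [inner_le_of_mem_forwardBackward hA.1 (hT x) hz,
      inner_sub_le_of_cocoercive hPsa (inner_apply_self_nonneg hPpos) hPinv₁ hβ0 hC0 hCpos
        x (T x) z]

/-- separation properties of
`ψ_x(z) := ⟨Mx − M(T_FB x), z − T_FB x⟩ − (β/4)‖x − T_FB x‖_P²`. -/
theorem separating_hyperplane_properties
    {H : Type*} [NormedAddCommGroup H] [InnerProductSpace ℝ H] [CompleteSpace H]
    (P Pinv : H →L[ℝ] H)
    (hPsa : IsSelfAdjoint P)
    (hPpos : ∃ c > 0, ∀ x : H, c * ‖x‖ ^ 2 ≤ inner ℝ x (P x))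
    (hPinv₁ : P.comp Pinv = ContinuousLinearMap.id ℝ H)
    (hPinv₂ : Pinv.comp P = ContinuousLinearMap.id ℝ H)
    -- Assumption 1
    (A : H → Set H) (hA : IsMaxMonotoneOp A)
    (β : ℝ) (hβ0 : 0 ≤ β) (hβ4 : β < 4)
    (C : H → H)
    (hC0 : β = 0 → ∀ x y : H, C x = C y)
    (hCpos : 0 < β → ∀ x y : H,
      (1 / β) * pnorm Pinv (C x - C y) ^ 2 ≤ inner ℝ (C x - C y) (x - y))
    (hzer : ∃ x : H, -C x ∈ A x)
    -- Assumption 2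
    (M : H → H) (L_M : ℝ)
    (hMsm : ∀ x y : H, pnorm P (x - y) ^ 2 ≤ inner ℝ (M x - M y) (x - y))
    (hMlip : ∀ x y : H, ‖M x - M y‖ ≤ L_M * ‖x - y‖)
    -- T_FB
    (T : H → H)
    (hT : ∀ x : H, M x - C x - M (T x) ∈ A (T x))
    (hTuniq : ∀ x xhat : H, M x - C x - M xhat ∈ A xhat → xhat = T x)
    -- the affine separating function
    (ψ : H → H → ℝ)
    (hψ : ∀ x z : H, ψ x z =
      inner ℝ (M x - M (T x)) (z - T x) - β / 4 * pnorm P (x - T x) ^ 2) :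
    (∀ x : H, (1 - β / 4) * pnorm P (x - T x) ^ 2 ≤ ψ x x ∧ 0 ≤ ψ x x) ∧
    (∀ x : H, ψ x x = 0 ↔ -C x ∈ A x) ∧
    (∀ x z : H, -C z ∈ A z → ψ x z ≤ 0) :=
  separating_hyperplane_properties_general P Pinv hPsa hPpos hPinv₁ A hA β hβ0 hβ4 C hC0 hCpos M
    hMsm T hT hTuniq ψ hψ
end

section
/- Suppose Assumption 1 holds, that each kernel M_k : H → H (k ∈ ℕ) is 1-strongly monotone w.r.t. ‖·‖_P and L_M-Lipschitz continuous w.r.t. ‖·‖ (same P and L_M for all k), and let S be a bounded self-adjoint strongly positive linear operator on H. Let (x_k)_{k∈ℕ} and (x̂_k)_{k∈ℕ} be sequences in H satisfying M_k x_k − C x_k − M_k x̂_k ∈ A x̂_k for every k, such that (i) ‖x_k − z‖_S converges (as a real sequence) for every z ∈ zer(A + C), and (ii) ‖x_k − x̂_k‖_S → 0. Then x_k converges weakly to some x̄ ∈ zer(A + C). -/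
open Filter Topology

/-- Weak convergence of a sequence in a Hilbert space. -/
def WeakConvergesTo {H : Type*} [NormedAddCommGroup H] [InnerProductSpace ℝ H]
    (x : ℕ → H) (xbar : H) : Prop :=
  ∀ y : H, Tendsto (fun k => (inner ℝ (x k) y : ℝ)) atTop (nhds (inner ℝ xbar y))


/-!
Cocoercivity of `C` and monotonicity of `A`, tested against a zero `z` of `A + C`, force
`C x_k → C z` strongly. Along a subsequence with `x_k ⇀ p` we then have `x̂_k ⇀ p` and
`M_k x_k - M_k x̂_k - C x_k → -C z` strongly, so the weak-strong closedness of the graph of the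
maximally monotone `A` gives `-C z ∈ A p`, and cocoercivity once more gives `C p = C z`. Hence every
weak cluster point of the bounded sequence `x` is a zero of `A + C`, and Opial's argument with the
converging `S`-distances shows that there is only one.
-/

open scoped RealInnerProductSpace

section WeakConvergence

variable {H : Type*} [NormedAddCommGroup H] [InnerProductSpace ℝ H]

theorem WeakConvergesTo.sub_const {x : ℕ → H} {p : H} (hx : WeakConvergesTo x p) (z : H) :
    WeakConvergesTo (fun k => x k - z) (p - z) := fun y => by
  simpa only [inner_sub_left] using (hx y).sub_const ⟪z, y⟫

theorem WeakConvergesTo.of_tendsto_sub {x y : ℕ → H} {p : H} (hx : WeakConvergesTo x p)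
    (hxy : Tendsto (fun k => x k - y k) atTop (𝓝 0)) : WeakConvergesTo y p := fun v => by
  simpa [inner_sub_left] using (hx v).sub (hxy.inner (tendsto_const_nhds (x := v)))

variable [CompleteSpace H]

theorem WeakConvergesTo.exists_norm_le {x : ℕ → H} {p : H} (hx : WeakConvergesTo x p) :
    ∃ B, ∀ k, ‖x k‖ ≤ B := by
  obtain ⟨B, hB⟩ := banach_steinhaus (g := fun k => innerSL ℝ (x k)) fun y => by
    obtain ⟨B, hB⟩ := (hx y).norm.bddAbove_range
    exact ⟨B, fun k => hB ⟨k, rfl⟩⟩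
  exact ⟨B, fun k => (innerSL_apply_norm ℝ (x k)).symm.trans_le (hB k)⟩

theorem WeakConvergesTo.tendsto_inner {a b : ℕ → H} {p q : H} (hb : WeakConvergesTo b q)
    (ha : Tendsto a atTop (𝓝 p)) : Tendsto (fun k => ⟪a k, b k⟫) atTop (𝓝 ⟪p, q⟫) := by
  obtain ⟨B, hB⟩ := hb.exists_norm_le
  have hsmall : Tendsto (fun k => ⟪a k - p, b k⟫) atTop (𝓝 0) := by
    refine squeeze_zero_norm (fun k => (norm_inner_le_norm _ _).trans
      (mul_le_mul_of_nonneg_left (hB k) (norm_nonneg _))) ?_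
    simpa using (tendsto_iff_norm_sub_tendsto_zero.mp ha).mul_const B
  have hfixed : Tendsto (fun k => ⟪p, b k⟫) atTop (𝓝 ⟪p, q⟫) := by
    simpa only [real_inner_comm p] using hb p
  simpa [inner_sub_left] using hsmall.add hfixed

theorem WeakConvergesTo.map {x : ℕ → H} {p : H} (hx : WeakConvergesTo x p) (T : H →L[ℝ] H) :
    WeakConvergesTo (fun k => T (x k)) (T p) := fun y => by
  simpa only [ContinuousLinearMap.adjoint_inner_right] using hx (T.adjoint y)

open InnerProductSpace in
theorem exists_subseq_weakConvergesTo {x : ℕ → H} {B : ℝ} (hB : ∀ k, ‖x k‖ ≤ B) :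
    ∃ (p : H) (φ : ℕ → ℕ), StrictMono φ ∧ WeakConvergesTo (x ∘ φ) p := by
  set V := (Submodule.span ℝ (Set.range x)).topologicalClosure
  have : CompleteSpace V := (Submodule.isClosed_topologicalClosure _).completeSpace_coe
  have : TopologicalSpace.SeparableSpace V :=
    (TopologicalSpace.isSeparable_closure.mpr
      (Set.countable_range x).isSeparable.span).separableSpace
  have hxV : ∀ k, x k ∈ V :=
    fun k => Submodule.le_topologicalClosure _ (Submodule.subset_span ⟨k, rfl⟩)
  -- The functionals `⟪x k, ·⟫` restricted to the separable space `V` lie in a weak-* sequentially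
  -- compact ball; a limit point, precomposed with the projection onto `V`, is the weak limit.
  let f : ℕ → WeakDual ℝ V := fun k => StrongDual.toWeakDual (innerSL ℝ (⟨x k, hxV k⟩ : V))
  have hf : ∀ k, f k ∈ WeakDual.toStrongDual ⁻¹' Metric.closedBall 0 B := fun k => by
    change dist (innerSL ℝ (⟨x k, hxV k⟩ : V)) 0 ≤ B
    rw [dist_zero_right, innerSL_apply_norm]
    exact hB k
  obtain ⟨g, -, φ, hφ, hg⟩ := WeakDual.isSeqCompact_closedBall ℝ V 0 B hf
  refine ⟨(toDual ℝ H).symm ((WeakDual.toStrongDual g).comp V.orthogonalProjectionOnto), φ, hφ,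
    fun y => ?_⟩
  rw [toDual_symm_apply]
  refine ((WeakDual.eval_continuous _).tendsto _).comp hg |>.congr fun k => ?_
  simp [f]

theorem WeakConvergesTo.tendsto_inner_apply_sub_sub_inner_apply_sub (S : H →L[ℝ] H)
    {x : ℕ → H} {p : H} (hx : WeakConvergesTo x p) (z w : H) :
    Tendsto (fun k => ⟪x k - z, S (x k - z)⟫ - ⟪x k - w, S (x k - w)⟫) atTop
      (𝓝 (⟪p - z, S (p - z)⟫ - ⟪p - w, S (p - w)⟫)) := by
  have affine : ∀ u, ⟪u - z, S (u - z)⟫ - ⟪u - w, S (u - w)⟫ =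
      ⟪u, S (w - z)⟫ + ⟪w - z, S u⟫ + (⟪z, S z⟫ - ⟪w, S w⟫) := fun u => by
    simp only [map_sub, inner_sub_left, inner_sub_right]
    ring
  simp only [affine]
  refine ((hx _).add ?_).add_const _
  simpa only [real_inner_comm (w - z)] using hx.map S (w - z)

end WeakConvergence

section StronglyPositive

variable {H : Type*} [NormedAddCommGroup H] [InnerProductSpace ℝ H]

theorem pnorm_sq_s6 {S : H →L[ℝ] H} {c : ℝ} (hc : 0 ≤ c) (hS : ∀ x, c * ‖x‖ ^ 2 ≤ ⟪x, S x⟫)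
    (v : H) : pnorm S v ^ 2 = ⟪v, S v⟫ :=
  Real.sq_sqrt ((by positivity : 0 ≤ c * ‖v‖ ^ 2).trans (hS v))

theorem sqrt_mul_norm_le_pnorm {S : H →L[ℝ] H} {c : ℝ} (hc : 0 ≤ c)
    (hS : ∀ x, c * ‖x‖ ^ 2 ≤ ⟪x, S x⟫) (v : H) : √c * ‖v‖ ≤ pnorm S v := by
  rw [← Real.sqrt_sq (norm_nonneg v), ← Real.sqrt_mul hc]
  exact Real.sqrt_le_sqrt (hS v)

theorem tendsto_zero_of_tendsto_pnorm {S : H →L[ℝ] H} {c : ℝ} (hc : 0 < c)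
    (hS : ∀ x, c * ‖x‖ ^ 2 ≤ ⟪x, S x⟫) {v : ℕ → H}
    (hv : Tendsto (fun k => pnorm S (v k)) atTop (𝓝 0)) :
    Tendsto v atTop (𝓝 0) := by
  refine tendsto_zero_iff_norm_tendsto_zero.mpr (squeeze_zero (fun _ => norm_nonneg _)
    (fun k => ?_) (by simpa using hv.div_const √c))
  rw [le_div_iff₀' (Real.sqrt_pos.mpr hc)]
  exact sqrt_mul_norm_le_pnorm hc.le hS (v k)

theorem exists_norm_le_of_tendsto_pnorm {S : H →L[ℝ] H} {c : ℝ} (hc : 0 < c)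
    (hS : ∀ x, c * ‖x‖ ^ 2 ≤ ⟪x, S x⟫) {x : ℕ → H} {z : H} {l : ℝ}
    (hl : Tendsto (fun k => pnorm S (x k - z)) atTop (𝓝 l)) : ∃ B, ∀ k, ‖x k‖ ≤ B := by
  obtain ⟨b, hb⟩ := hl.bddAbove_range
  refine ⟨b / √c + ‖z‖, fun k => ?_⟩
  have hdist : ‖x k - z‖ ≤ b / √c := by
    rw [le_div_iff₀' (Real.sqrt_pos.mpr hc)]
    exact (sqrt_mul_norm_le_pnorm hc.le hS _).trans (hb ⟨k, rfl⟩)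
  calc ‖x k‖ ≤ ‖x k - z‖ + ‖z‖ := norm_le_norm_sub_add _ _
    _ ≤ b / √c + ‖z‖ := by gcongr

theorem exists_pos_mul_norm_sq_le_inner_apply_of_comp_eq_id {T R : H →L[ℝ] H}
    (hT : ∃ c > 0, ∀ x, c * ‖x‖ ^ 2 ≤ ⟪x, T x⟫) (hTR : T.comp R = ContinuousLinearMap.id ℝ H) :
    ∃ c > 0, ∀ x, c * ‖x‖ ^ 2 ≤ ⟪x, R x⟫ := by
  obtain ⟨c, hc, hT⟩ := hT
  have hTRx : ∀ x, T (R x) = x := fun x => congrArg (· x) hTR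
  refine ⟨c / (‖T‖ + 1) ^ 2, by positivity, fun x => ?_⟩
  have hx : ‖x‖ ≤ (‖T‖ + 1) * ‖R x‖ := calc
    ‖x‖ = ‖T (R x)‖ := by rw [hTRx]
    _ ≤ ‖T‖ * ‖R x‖ := T.le_opNorm _
    _ ≤ (‖T‖ + 1) * ‖R x‖ := by gcongr; linarith
  calc c / (‖T‖ + 1) ^ 2 * ‖x‖ ^ 2 ≤ c / (‖T‖ + 1) ^ 2 * ((‖T‖ + 1) * ‖R x‖) ^ 2 := by gcongr
    _ = c * ‖R x‖ ^ 2 := by field_simp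
    _ ≤ ⟪R x, T (R x)⟫ := hT (R x)
    _ = ⟪x, R x⟫ := by rw [hTRx, real_inner_comm]

theorem eq_of_weakConvergesTo_comp_of_tendsto_pnorm [CompleteSpace H] {S : H →L[ℝ] H} {c : ℝ}
    (hc : 0 < c) (hS : ∀ x, c * ‖x‖ ^ 2 ≤ ⟪x, S x⟫) {x : ℕ → H} {φ ψ : ℕ → ℕ} {p q : H}
    (hφ : Tendsto φ atTop atTop) (hψ : Tendsto ψ atTop atTop)
    (hp : WeakConvergesTo (x ∘ φ) p) (hq : WeakConvergesTo (x ∘ ψ) q) {l l' : ℝ}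
    (hl : Tendsto (fun k => pnorm S (x k - p)) atTop (𝓝 l))
    (hl' : Tendsto (fun k => pnorm S (x k - q)) atTop (𝓝 l')) : p = q := by
  have hdiff : Tendsto (fun k => ⟪x k - p, S (x k - p)⟫ - ⟪x k - q, S (x k - q)⟫) atTop
      (𝓝 (l ^ 2 - l' ^ 2)) := by
    simpa only [pnorm_sq_s6 hc.le hS] using (hl.pow 2).sub (hl'.pow 2)
  -- The difference of squared distances is affine in `x k`, so both cluster points give its limit.
  have hat_p := tendsto_nhds_unique (hdiff.comp hφ)
    (hp.tendsto_inner_apply_sub_sub_inner_apply_sub S p q)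
  have hat_q := tendsto_nhds_unique (hdiff.comp hψ)
    (hq.tendsto_inner_apply_sub_sub_inner_apply_sub S p q)
  have hzero : ⟪p - q, S (p - q)⟫ = 0 := by
    rw [← neg_sub p q] at hat_q
    simp only [sub_self, map_zero, inner_zero_left, map_neg, inner_neg_left, inner_neg_right,
      neg_neg] at hat_p hat_q
    linarith
  have hnorm : c * ‖p - q‖ ^ 2 ≤ 0 := hzero ▸ hS (p - q)
  have : ‖p - q‖ ^ 2 ≤ 0 := by nlinarith
  simpa [sub_eq_zero] using this

theorem exists_weakConvergesTo_mem_of_tendsto_pnorm [CompleteSpace H] {S : H →L[ℝ] H} {c : ℝ}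
    (hc : 0 < c) (hS : ∀ x, c * ‖x‖ ^ 2 ≤ ⟪x, S x⟫) {F : Set H} {x : ℕ → H} {B : ℝ}
    (hB : ∀ k, ‖x k‖ ≤ B) (hF : ∀ z ∈ F, ∃ l, Tendsto (fun k => pnorm S (x k - z)) atTop (𝓝 l))
    (hcluster : ∀ φ p, Tendsto φ atTop atTop → WeakConvergesTo (x ∘ φ) p → p ∈ F) :
    ∃ p ∈ F, WeakConvergesTo x p := by
  obtain ⟨p, φ, hφ, hp⟩ := exists_subseq_weakConvergesTo hB
  have hpF := hcluster φ p hφ.tendsto_atTop hp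
  refine ⟨p, hpF, fun y => tendsto_of_subseq_tendsto fun ns hns => ?_⟩
  obtain ⟨q, ψ, hψ, hq⟩ := exists_subseq_weakConvergesTo (x := x ∘ ns) fun k => hB (ns k)
  have hns_ψ : Tendsto (ns ∘ ψ) atTop atTop := hns.comp hψ.tendsto_atTop
  have hqF := hcluster _ q hns_ψ hq
  obtain ⟨l, hl⟩ := hF p hpF
  obtain ⟨l', hl'⟩ := hF q hqF
  have hpq :=
    eq_of_weakConvergesTo_comp_of_tendsto_pnorm hc hS hφ.tendsto_atTop hns_ψ hp hq hl hl'
  exact ⟨ψ, hpq ▸ hq y⟩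

end StronglyPositive

section MonotoneOperator

variable {H : Type*} [NormedAddCommGroup H] [InnerProductSpace ℝ H]

theorem IsMaxMonotoneOp.mem_of_weakConvergesTo_of_tendsto [CompleteSpace H] {A : H → Set H}
    (hA : IsMaxMonotoneOp A) {y u : ℕ → H} {p v : H} (hmem : ∀ k, u k ∈ A (y k))
    (hy : WeakConvergesTo y p) (hu : Tendsto u atTop (𝓝 v)) : v ∈ A p :=
  hA.2 p v fun z w hw => ge_of_tendsto'
    ((hy.sub_const z).tendsto_inner (hu.sub_const w)) fun k => hA.1 (hmem k) hw

def IsCocoercive (γ : ℝ) (C : H → H) : Prop :=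
  ∀ x y, γ * ‖C x - C y‖ ^ 2 ≤ ⟪C x - C y, x - y⟫

theorem IsCocoercive.of_forall_eq {C : H → H} (hC : ∀ x y, C x = C y) (γ : ℝ) :
    IsCocoercive γ C := fun x y => by simp [hC x y]

theorem IsCocoercive.of_pnorm {R : H →L[ℝ] H} {c : ℝ} (hc : 0 ≤ c)
    (hR : ∀ x, c * ‖x‖ ^ 2 ≤ ⟪x, R x⟫) {β : ℝ} (hβ : 0 < β) {C : H → H}
    (hC : ∀ x y, (1 / β) * pnorm R (C x - C y) ^ 2 ≤ ⟪C x - C y, x - y⟫) :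
    IsCocoercive (c / β) C := fun x y => calc
  c / β * ‖C x - C y‖ ^ 2 = (1 / β) * (c * ‖C x - C y‖ ^ 2) := by ring
  _ ≤ (1 / β) * pnorm R (C x - C y) ^ 2 := by
    rw [pnorm_sq_s6 hc hR]; gcongr; exact hR _
  _ ≤ ⟪C x - C y, x - y⟫ := hC x y

namespace IsCocoercive

variable {γ : ℝ} {C : H → H}

theorem norm_map_sub_le (hC : IsCocoercive γ C) (hγ : 0 < γ) (x y : H) :
    ‖C x - C y‖ ≤ γ⁻¹ * ‖x - y‖ := by
  rw [le_inv_mul_iff₀ hγ]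
  rcases (norm_nonneg (C x - C y)).eq_or_lt with h | h
  · rw [← h, mul_zero]; positivity
  have := (hC x y).trans (real_inner_le_norm _ _)
  nlinarith

theorem eq_of_weakConvergesTo [CompleteSpace H] (hC : IsCocoercive γ C) (hγ : 0 < γ)
    {x : ℕ → H} {p c : H} (hx : WeakConvergesTo x p)
    (hCx : Tendsto (fun k => C (x k)) atTop (𝓝 c)) : C p = c := by
  have hlim : γ * ‖c - C p‖ ^ 2 ≤ ⟪c - C p, p - p⟫ :=
    le_of_tendsto_of_tendsto' (((hCx.sub_const _).norm.pow 2).const_mul γ)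
      ((hx.sub_const p).tendsto_inner (hCx.sub_const _)) fun k => hC (x k) p
  rw [sub_self, inner_zero_right] at hlim
  have : ‖c - C p‖ ^ 2 ≤ 0 := by nlinarith
  simpa [sub_eq_zero, eq_comm] using this

theorem tendsto_apply_of_isMonotoneOp (hC : IsCocoercive γ C) (hγ : 0 < γ) {A : H → Set H}
    (hA : IsMonotoneOp A) {z : H} (hz : -C z ∈ A z) {x xh w : ℕ → H} {B : ℝ}
    (hB : ∀ k, ‖x k‖ ≤ B) (hmem : ∀ k, w k - C (x k) ∈ A (xh k))
    (hw : Tendsto w atTop (𝓝 0)) (hres : Tendsto (fun k => x k - xh k) atTop (𝓝 0)) :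
    Tendsto (fun k => C (x k)) atTop (𝓝 (C z)) := by
  set K := B + ‖z‖
  have hxz : ∀ k, ‖x k - z‖ ≤ K := fun k => (norm_sub_le _ _).trans (by linarith [hB k])
  have hbound : ∀ k, γ * ‖C (x k) - C z‖ ^ 2 ≤
      ‖w k‖ * (K + ‖x k - xh k‖) + γ⁻¹ * K * ‖x k - xh k‖ := fun k => by
    have hmono : ⟪C (x k) - C z, xh k - z⟫ ≤ ⟪w k, xh k - z⟫ := by
      have := hA (hmem k) hz
      rw [show w k - C (x k) - -C z = w k - (C (x k) - C z) by abel, inner_sub_left] at this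
      linarith
    have hxhz : ‖xh k - z‖ ≤ K + ‖x k - xh k‖ := calc
      ‖xh k - z‖ = ‖(x k - z) - (x k - xh k)‖ := by congr 1; abel
      _ ≤ ‖x k - z‖ + ‖x k - xh k‖ := norm_sub_le _ _
      _ ≤ K + ‖x k - xh k‖ := by gcongr; exact hxz k
    calc γ * ‖C (x k) - C z‖ ^ 2 ≤ ⟪C (x k) - C z, x k - z⟫ := hC _ _
      _ = ⟪C (x k) - C z, xh k - z⟫ + ⟪C (x k) - C z, x k - xh k⟫ := by
        rw [← inner_add_right]; congr 1; abel
      _ ≤ ‖w k‖ * ‖xh k - z‖ + ‖C (x k) - C z‖ * ‖x k - xh k‖ :=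
        add_le_add (hmono.trans (real_inner_le_norm _ _)) (real_inner_le_norm _ _)
      _ ≤ ‖w k‖ * (K + ‖x k - xh k‖) + γ⁻¹ * K * ‖x k - xh k‖ := by
        gcongr
        exact (hC.norm_map_sub_le hγ _ _).trans (by gcongr; exact hxz k)
  have hr : Tendsto (fun k => ‖x k - xh k‖) atTop (𝓝 0) := by simpa using hres.norm
  have hrhs : Tendsto (fun k => (‖w k‖ * (K + ‖x k - xh k‖) + γ⁻¹ * K * ‖x k - xh k‖) / γ)
      atTop (𝓝 0) := by
    simpa using ((hw.norm.mul (hr.const_add K)).add (hr.const_mul (γ⁻¹ * K))).div_const γ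
  have hsq : Tendsto (fun k => ‖C (x k) - C z‖ ^ 2) atTop (𝓝 0) :=
    squeeze_zero (fun _ => by positivity) (fun k => by rw [le_div_iff₀' hγ]; exact hbound k) hrhs
  exact tendsto_iff_norm_sub_tendsto_zero.mpr (by simpa using hsq.sqrt)

end IsCocoercive

end MonotoneOperator

theorem nofob_abstract_weak_convergence_general
    {H : Type*} [NormedAddCommGroup H] [InnerProductSpace ℝ H] [CompleteSpace H]
    (P Pinv S : H →L[ℝ] H)
    (hPpos : ∃ c > 0, ∀ x : H, c * ‖x‖ ^ 2 ≤ inner ℝ x (P x))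
    (hPinv₁ : P.comp Pinv = ContinuousLinearMap.id ℝ H)
    (hSpos : ∃ c > 0, ∀ x : H, c * ‖x‖ ^ 2 ≤ inner ℝ x (S x))
    -- Assumption 1
    (A : H → Set H) (hA : IsMaxMonotoneOp A)
    (β : ℝ) (hβ0 : 0 ≤ β)
    (C : H → H)
    (hC0 : β = 0 → ∀ x y : H, C x = C y)
    (hCpos : 0 < β → ∀ x y : H,
      (1 / β) * pnorm Pinv (C x - C y) ^ 2 ≤ inner ℝ (C x - C y) (x - y))
    (hzer : ∃ x : H, -C x ∈ A x)
    -- kernels M_k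
    (M : ℕ → H → H) (L_M : ℝ)
    (hMlip : ∀ k, ∀ x y : H, ‖M k x - M k y‖ ≤ L_M * ‖x - y‖)
    -- the sequences
    (x xh : ℕ → H)
    (hxh : ∀ k, M k (x k) - C (x k) - M k (xh k) ∈ A (xh k))
    (hFejer : ∀ z : H, -C z ∈ A z →
      ∃ l : ℝ, Tendsto (fun k => pnorm S (x k - z)) atTop (nhds l))
    (hres : Tendsto (fun k => pnorm S (x k - xh k)) atTop (nhds 0)) :
    ∃ xbar : H, -C xbar ∈ A xbar ∧ WeakConvergesTo x xbar := by
  obtain ⟨c, hc, hS⟩ := hSpos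
  obtain ⟨z, hz⟩ := hzer
  obtain ⟨γ, hγ, hC⟩ : ∃ γ > 0, IsCocoercive γ C := by
    rcases hβ0.eq_or_lt with hβ | hβ
    · exact ⟨1, one_pos, IsCocoercive.of_forall_eq (hC0 hβ.symm) 1⟩
    · obtain ⟨c', hc', hPinv⟩ := exists_pos_mul_norm_sq_le_inner_apply_of_comp_eq_id hPpos hPinv₁
      exact ⟨c' / β, by positivity, IsCocoercive.of_pnorm hc'.le hPinv hβ (hCpos hβ)⟩
  obtain ⟨l, hl⟩ := hFejer z hz
  obtain ⟨B, hB⟩ := exists_norm_le_of_tendsto_pnorm hc hS hl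
  have hgap : Tendsto (fun k => x k - xh k) atTop (𝓝 0) :=
    tendsto_zero_of_tendsto_pnorm hc hS hres
  set w := fun k => M k (x k) - M k (xh k)
  have hw : Tendsto w atTop (𝓝 0) := squeeze_zero_norm (fun k => hMlip k _ _)
    (by simpa using hgap.norm.const_mul L_M)
  have hmem : ∀ k, w k - C (x k) ∈ A (xh k) := fun k => by
    simpa only [w, sub_right_comm] using hxh k
  have hCx := hC.tendsto_apply_of_isMonotoneOp hγ hA.1 hz hB hmem hw hgap
  refine exists_weakConvergesTo_mem_of_tendsto_pnorm (F := {z | -C z ∈ A z}) hc hS hB hFejer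
    fun φ p hφ hp => ?_
  have hAp : -C z ∈ A p := hA.mem_of_weakConvergesTo_of_tendsto (fun k => hmem (φ k))
    (hp.of_tendsto_sub (hgap.comp hφ)) (by simpa using (hw.comp hφ).sub (hCx.comp hφ))
  rwa [← hC.eq_of_weakConvergesTo hγ hp (hCx.comp hφ)] at hAp

/-- sequences with converging `S`-distances to the solution set and with
vanishing forward-backward residual converge weakly to a zero of `A + C`. -/
theorem nofob_abstract_weak_convergence
    {H : Type*} [NormedAddCommGroup H] [InnerProductSpace ℝ H] [CompleteSpace H]
    (P Pinv S : H →L[ℝ] H)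
    (hPsa : IsSelfAdjoint P)
    (hPpos : ∃ c > 0, ∀ x : H, c * ‖x‖ ^ 2 ≤ inner ℝ x (P x))
    (hPinv₁ : P.comp Pinv = ContinuousLinearMap.id ℝ H)
    (hPinv₂ : Pinv.comp P = ContinuousLinearMap.id ℝ H)
    (hSsa : IsSelfAdjoint S)
    (hSpos : ∃ c > 0, ∀ x : H, c * ‖x‖ ^ 2 ≤ inner ℝ x (S x))
    -- Assumption 1
    (A : H → Set H) (hA : IsMaxMonotoneOp A)
    (β : ℝ) (hβ0 : 0 ≤ β) (hβ4 : β < 4)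
    (C : H → H)
    (hC0 : β = 0 → ∀ x y : H, C x = C y)
    (hCpos : 0 < β → ∀ x y : H,
      (1 / β) * pnorm Pinv (C x - C y) ^ 2 ≤ inner ℝ (C x - C y) (x - y))
    (hzer : ∃ x : H, -C x ∈ A x)
    -- kernels M_k
    (M : ℕ → H → H) (L_M : ℝ)
    (hMsm : ∀ k, ∀ x y : H, pnorm P (x - y) ^ 2 ≤ inner ℝ (M k x - M k y) (x - y))
    (hMlip : ∀ k, ∀ x y : H, ‖M k x - M k y‖ ≤ L_M * ‖x - y‖)
    -- the sequences
    (x xh : ℕ → H)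
    (hxh : ∀ k, M k (x k) - C (x k) - M k (xh k) ∈ A (xh k))
    (hFejer : ∀ z : H, -C z ∈ A z →
      ∃ l : ℝ, Tendsto (fun k => pnorm S (x k - z)) atTop (nhds l))
    (hres : Tendsto (fun k => pnorm S (x k - xh k)) atTop (nhds 0)) :
    ∃ xbar : H, -C xbar ∈ A xbar ∧ WeakConvergesTo x xbar :=
  nofob_abstract_weak_convergence_general P Pinv S hPpos hPinv₁ hSpos A hA β hβ0 C hC0 hCpos hzer M
    L_M hMlip x xh hxh hFejer hres
end

section
/- Suppose Assumption 1 holds, that M_k : H → H is 1-strongly monotone w.r.t. ‖·‖_P and L_M-Lipschitz continuous w.r.t. ‖·‖, and let S be a bounded self-adjoint strongly positive linear operator on H. Then for all x, y ∈ H with x ≠ y one has M_k x ≠ M_k y, and the quantity μ_k^{x,y} := (⟨M_k x − M_k y, x − y⟩ − (β/4)‖x − y‖_P²) / ‖M_k x − M_k y‖²_{S⁻¹} satisfies (1 − β/4)·λ_min(P)/(L_M²·λ_max(S⁻¹)) ≤ μ_k^{x,y} ≤ λ_max(S)/λ_min(P). -/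
open RealInnerProductSpace

namespace ContinuousLinearMap

variable {H : Type*} [NormedAddCommGroup H] [InnerProductSpace ℝ H]

theorem IsPositive.real_inner_sq_le {T : H →L[ℝ] H} (hT : T.IsPositive) (u v : H) :
    ⟪T u, v⟫ ^ 2 ≤ ⟪T u, u⟫ * ⟪T v, v⟫ := by
  have hquad : ∀ t : ℝ, 0 ≤ ⟪T v, v⟫ * (t * t) + 2 * ⟪T u, v⟫ * t + ⟪T u, u⟫ := by
    intro t
    have h := hT.inner_nonneg_left (u + t • v)
    have hsymm : ⟪T v, u⟫ = ⟪T u, v⟫ := by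
      rw [hT.inner_left_eq_inner_right, real_inner_comm]
    simp only [map_add, map_smul, inner_add_left, inner_add_right, real_inner_smul_left,
      real_inner_smul_right, hsymm] at h
    linarith
  have hdiscrim := discrim_le_zero hquad
  rw [discrim] at hdiscrim
  linarith

theorem _root_.IsSelfAdjoint.isPositive_of_mul_norm_sq_le [CompleteSpace H] {T : H →L[ℝ] H}
    (hT : IsSelfAdjoint T) {c : ℝ} (hc : 0 ≤ c) (h : ∀ x : H, c * ‖x‖ ^ 2 ≤ ⟪x, T x⟫) :
    T.IsPositive :=
  (isPositive_iff' T).2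
    ⟨hT, fun x => real_inner_comm x (T x) ▸ (by positivity : 0 ≤ c * ‖x‖ ^ 2).trans (h x)⟩

end ContinuousLinearMap

section

open ContinuousLinearMap

variable {H : Type*} [NormedAddCommGroup H] [InnerProductSpace ℝ H] {S Sinv : H →L[ℝ] H}

theorem sq_pnorm_of_comp_eq_id (hS : ∀ x : H, 0 ≤ ⟪x, S x⟫) (hSinv : S.comp Sinv = .id ℝ H)
    (u : H) : pnorm Sinv u ^ 2 = ⟪Sinv u, S (Sinv u)⟫ := by
  have hu : S (Sinv u) = u := DFunLike.congr_fun hSinv u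
  rw [pnorm, Real.sq_sqrt, hu, real_inner_comm]
  simpa only [hu, real_inner_comm] using hS (Sinv u)

theorem sq_pnorm_pos_of_comp_eq_id (hSinv : S.comp Sinv = .id ℝ H) {c : ℝ} (hc : 0 < c)
    (hS : ∀ x : H, c * ‖x‖ ^ 2 ≤ ⟪x, S x⟫) {u : H} (hu : u ≠ 0) : 0 < pnorm Sinv u ^ 2 := by
  have hSu : S (Sinv u) = u := DFunLike.congr_fun hSinv u
  have hv : Sinv u ≠ 0 := fun h => hu (by rw [← hSu, h, map_zero])
  rw [sq_pnorm_of_comp_eq_id (fun x => (by positivity : 0 ≤ c * ‖x‖ ^ 2).trans (hS x)) hSinv]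
  exact (mul_pos hc (pow_pos (norm_pos_iff.2 hv) 2)).trans_le (hS (Sinv u))

theorem real_inner_sq_le_sq_pnorm_mul_sq_pnorm (hS : S.IsPositive)
    (hSinv : S.comp Sinv = .id ℝ H) (m d : H) :
    ⟪m, d⟫ ^ 2 ≤ pnorm Sinv m ^ 2 * pnorm S d ^ 2 := by
  have hm : S (Sinv m) = m := DFunLike.congr_fun hSinv m
  rw [sq_pnorm_of_comp_eq_id hS.inner_nonneg_right hSinv, pnorm,
    Real.sq_sqrt (hS.inner_nonneg_right d), real_inner_comm (S (Sinv m)), real_inner_comm (S d)]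
  simpa only [hm] using hS.real_inner_sq_le (Sinv m) d

theorem mul_real_inner_le_mul_sq_pnorm (hS : S.IsPositive) (hSinv : S.comp Sinv = .id ℝ H)
    {m d : H} (hd : d ≠ 0) {a b : ℝ} (ha : 0 ≤ a) (hmd : a * ‖d‖ ^ 2 ≤ ⟪m, d⟫)
    (hSd : pnorm S d ^ 2 ≤ b * ‖d‖ ^ 2) : a * ⟪m, d⟫ ≤ b * pnorm Sinv m ^ 2 := by
  have hd2 : 0 < ‖d‖ ^ 2 := pow_pos (norm_pos_iff.2 hd) 2
  have hmd0 : 0 ≤ ⟪m, d⟫ := (by positivity : 0 ≤ a * ‖d‖ ^ 2).trans hmd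
  refine le_of_mul_le_mul_right ?_ hd2
  calc a * ⟪m, d⟫ * ‖d‖ ^ 2 = ⟪m, d⟫ * (a * ‖d‖ ^ 2) := by ring
    _ ≤ ⟪m, d⟫ ^ 2 := by
      rw [sq ⟪m, d⟫]
      exact mul_le_mul_of_nonneg_left hmd hmd0
    _ ≤ pnorm Sinv m ^ 2 * pnorm S d ^ 2 := real_inner_sq_le_sq_pnorm_mul_sq_pnorm hS hSinv m d
    _ ≤ pnorm Sinv m ^ 2 * (b * ‖d‖ ^ 2) := by gcongr
    _ = b * pnorm Sinv m ^ 2 * ‖d‖ ^ 2 := by ring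

end

theorem mu_bounds_general
    {H : Type*} [NormedAddCommGroup H] [InnerProductSpace ℝ H] [CompleteSpace H]
    (P S Sinv : H →L[ℝ] H)
    (hSsa : IsSelfAdjoint S)
    (hSpos : ∃ c > 0, ∀ x : H, c * ‖x‖ ^ 2 ≤ inner ℝ x (S x))
    (hSinv₁ : S.comp Sinv = ContinuousLinearMap.id ℝ H)
    -- Assumption 1
    (β : ℝ) (hβ0 : 0 ≤ β) (hβ4 : β < 4)
    -- kernel M_k
    (M : H → H) (L_M : ℝ)
    (hMsm : ∀ x y : H, pnorm P (x - y) ^ 2 ≤ inner ℝ (M x - M y) (x - y))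
    (hMlip : ∀ x y : H, ‖M x - M y‖ ≤ L_M * ‖x - y‖)
    -- spectral constants
    (lminP lmaxS lmaxSinv : ℝ)
    (hlminP : 0 < lminP) (hlmaxSinv : 0 < lmaxSinv)
    (hPLB : ∀ x : H, lminP * ‖x‖ ^ 2 ≤ pnorm P x ^ 2)
    (hSUB : ∀ x : H, pnorm S x ^ 2 ≤ lmaxS * ‖x‖ ^ 2)
    (hSinvUB : ∀ x : H, pnorm Sinv x ^ 2 ≤ lmaxSinv * ‖x‖ ^ 2) :
    ∀ x y : H, x ≠ y →
      M x ≠ M y ∧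
      (1 - β / 4) * lminP / (L_M ^ 2 * lmaxSinv) ≤
        ((inner ℝ (M x - M y) (x - y) : ℝ) - β / 4 * pnorm P (x - y) ^ 2) /
          pnorm Sinv (M x - M y) ^ 2 ∧
      ((inner ℝ (M x - M y) (x - y) : ℝ) - β / 4 * pnorm P (x - y) ^ 2) /
          pnorm Sinv (M x - M y) ^ 2 ≤ lmaxS / lminP := by
  intro x y hxy
  obtain ⟨c, hc, hSc⟩ := hSpos
  have hS : S.IsPositive := hSsa.isPositive_of_mul_norm_sq_le hc.le hSc
  set d := x - y
  set m := M x - M y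
  have hd : d ≠ 0 := sub_ne_zero.2 hxy
  have hd2 : 0 < ‖d‖ ^ 2 := pow_pos (norm_pos_iff.2 hd) 2
  have hmd : lminP * ‖d‖ ^ 2 ≤ ⟪m, d⟫ := (hPLB d).trans (hMsm x y)
  have hm : m ≠ 0 := fun hm0 => by
    rw [hm0, inner_zero_left] at hmd
    nlinarith
  have hD : 0 < pnorm Sinv m ^ 2 := sq_pnorm_pos_of_comp_eq_id hSinv₁ hc hSc hm
  refine ⟨sub_ne_zero.1 hm, ?_, ?_⟩
  · have hN₀ : 0 ≤ (1 - β / 4) * lminP * ‖d‖ ^ 2 :=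
      mul_nonneg (mul_nonneg (by linarith) hlminP.le) hd2.le
    have hN : (1 - β / 4) * lminP * ‖d‖ ^ 2 ≤ ⟪m, d⟫ - β / 4 * pnorm P d ^ 2 := by
      nlinarith [hPLB d, hMsm x y]
    have hDm : pnorm Sinv m ^ 2 ≤ lmaxSinv * (L_M * ‖d‖) ^ 2 :=
      (hSinvUB m).trans (by gcongr; exact hMlip x y)
    calc (1 - β / 4) * lminP / (L_M ^ 2 * lmaxSinv)
        = (1 - β / 4) * lminP * ‖d‖ ^ 2 / (lmaxSinv * (L_M * ‖d‖) ^ 2) := by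
          rw [mul_pow, ← mul_div_mul_right _ _ hd2.ne']
          ring
      _ ≤ _ := div_le_div₀ (hN₀.trans hN) hN hD hDm
  · rw [div_le_div_iff₀ hD hlminP]
    calc (⟪m, d⟫ - β / 4 * pnorm P d ^ 2) * lminP ≤ lminP * ⟪m, d⟫ := by
          rw [mul_comm]
          exact mul_le_mul_of_nonneg_left (sub_le_self _ (by positivity)) hlminP.le
      _ ≤ lmaxS * pnorm Sinv m ^ 2 :=
          mul_real_inner_le_mul_sq_pnorm hS hSinv₁ hd hlminP.le hmd (hSUB d)

/-- bounds on the projection step-length `μ_k^{x,y}`. -/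
theorem mu_bounds
    {H : Type*} [NormedAddCommGroup H] [InnerProductSpace ℝ H] [CompleteSpace H]
    (P Pinv S Sinv : H →L[ℝ] H)
    (hPsa : IsSelfAdjoint P) (hSsa : IsSelfAdjoint S)
    (hPpos : ∃ c > 0, ∀ x : H, c * ‖x‖ ^ 2 ≤ inner ℝ x (P x))
    (hSpos : ∃ c > 0, ∀ x : H, c * ‖x‖ ^ 2 ≤ inner ℝ x (S x))
    (hPinv₁ : P.comp Pinv = ContinuousLinearMap.id ℝ H)
    (hPinv₂ : Pinv.comp P = ContinuousLinearMap.id ℝ H)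
    (hSinv₁ : S.comp Sinv = ContinuousLinearMap.id ℝ H)
    (hSinv₂ : Sinv.comp S = ContinuousLinearMap.id ℝ H)
    -- Assumption 1
    (A : H → Set H) (hA : IsMaxMonotoneOp A)
    (β : ℝ) (hβ0 : 0 ≤ β) (hβ4 : β < 4)
    (C : H → H)
    (hC0 : β = 0 → ∀ x y : H, C x = C y)
    (hCpos : 0 < β → ∀ x y : H,
      (1 / β) * pnorm Pinv (C x - C y) ^ 2 ≤ inner ℝ (C x - C y) (x - y))
    (hzer : ∃ x : H, -C x ∈ A x)
    -- kernel M_k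
    (M : H → H) (L_M : ℝ)
    (hMsm : ∀ x y : H, pnorm P (x - y) ^ 2 ≤ inner ℝ (M x - M y) (x - y))
    (hMlip : ∀ x y : H, ‖M x - M y‖ ≤ L_M * ‖x - y‖)
    -- spectral constants
    (lminP lmaxS lmaxSinv : ℝ)
    (hlminP : 0 < lminP) (hlmaxS : 0 < lmaxS) (hlmaxSinv : 0 < lmaxSinv)
    (hPLB : ∀ x : H, lminP * ‖x‖ ^ 2 ≤ pnorm P x ^ 2)
    (hSUB : ∀ x : H, pnorm S x ^ 2 ≤ lmaxS * ‖x‖ ^ 2)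
    (hSinvUB : ∀ x : H, pnorm Sinv x ^ 2 ≤ lmaxSinv * ‖x‖ ^ 2) :
    ∀ x y : H, x ≠ y →
      M x ≠ M y ∧
      (1 - β / 4) * lminP / (L_M ^ 2 * lmaxSinv) ≤
        ((inner ℝ (M x - M y) (x - y) : ℝ) - β / 4 * pnorm P (x - y) ^ 2) /
          pnorm Sinv (M x - M y) ^ 2 ∧
      ((inner ℝ (M x - M y) (x - y) : ℝ) - β / 4 * pnorm P (x - y) ^ 2) /
          pnorm Sinv (M x - M y) ^ 2 ≤ lmaxS / lminP :=
  mu_bounds_general P S Sinv hSsa hSpos hSinv₁ β hβ0 hβ4 M L_M hMsm hMlip lminP lmaxS lmaxSinv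
    hlminP hlmaxSinv hPLB hSUB hSinvUB
end

section
/- (Four-operator splitting with conservative step-length; generalizes forward-backward-forward and forward-backward-half-forward splitting.) Suppose Assumption 4 holds and the step sizes satisfy γ_k ∈ [ε, 1/ε] and γ_k·(β_E + √(β_E² + 16(L_D + ‖K‖)²)) ≤ 4 − ε for some ε ∈ (0, 1). Let x_0 ∈ H and for each k: let x̂_k be the unique point with x_k − γ_k(D x_k + K x_k + E x_k) − x̂_k ∈ γ_k·B x̂_k, and set x_{k+1} := x̂_k − γ_k·((D + K)x̂_k − (D + K)x_k). Then x_k converges weakly to some x̄ ∈ Z := zer(B + D + E + K). Moreover, if H is finite-dimensional and there exist κ ≥ 0, ν > 0 and an open set U ⊇ Z with dist(x, Z) ≤ κ‖v‖ whenever x ∈ U, v − Dx − Ex − Kx ∈ Bx and ‖v‖ < ν, then there exist K₀ ∈ ℕ, c ∈ [0, 1), R ≥ 0 and x̄ ∈ Z such that dist(x_{k+1}, Z) ≤ c·dist(x_k, Z) and ‖x_k − x̄‖ ≤ R·c^k for all k ≥ K₀. -/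
/-!
Each step satisfies, for every zero `z`, the Fejér inequality
`‖x (k+1) - z‖² + ε/8 ‖x k - xh k‖² + ε³/16 ‖E (x k) - E z‖² ≤ ‖x k - z‖²`: monotonicity of
`B + D`, skewness of `K` and cocoercivity of `E` leave cross terms that the step-size condition
absorbs. Summing it gives `x k - xh k → 0` and `E (x k) → E z` strongly, so the residual
`u k + (D + E + K) (xh k)`, where `u k ∈ B (xh k)`, tends to `0`. Weak limits of the iterates
along ultrafilters are then zeros: the inclusion passes to the limit because `K` is linear and
skew and `E (xh k)` converges strongly. Opial's argument upgrades this to weak convergence.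

In finite dimensions the convergence is strong, so eventually `xh k` lies in the error-bound
neighbourhood and `infDist (x k) Z ≤ C ‖x k - xh k‖`. With the Fejér inequality this contracts
`infDist (x k) Z ^ 2` by the factor `1 - ε / (8 C²)`, and since `‖x (k+1) - x k‖ ≤ 2 ‖x k - xh k‖`
the steps decay geometrically.
-/

open Filter Topology

open scoped RealInnerProductSpace

section WeakConvergence

variable {H ι : Type*} [NormedAddCommGroup H] [InnerProductSpace ℝ H]

def WeakTendsto (x : ι → H) (l : Filter ι) (w : H) : Prop :=
  ∀ y, Tendsto (fun i => ⟪x i, y⟫) l (𝓝 ⟪w, y⟫)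

theorem WeakTendsto.sub_const {x : ι → H} {l : Filter ι} {w : H} (hx : WeakTendsto x l w)
    (p : H) : WeakTendsto (fun i => x i - p) l (w - p) := fun y => by
  simpa only [inner_sub_left] using (hx y).sub_const ⟪p, y⟫

theorem WeakTendsto.of_tendsto_sub {x x' : ι → H} {l : Filter ι} {w : H}
    (hx : WeakTendsto x l w) (h : Tendsto (fun i => x i - x' i) l (𝓝 0)) :
    WeakTendsto x' l w := fun y => by
  simpa [inner_sub_left] using (hx y).sub (h.inner (tendsto_const_nhds (x := y)))

theorem Filter.Tendsto.inner_weakTendsto {a b : ι → H} {l : Filter ι} {a₀ b₀ : H}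
    (ha : Tendsto a l (𝓝 a₀)) (hb : WeakTendsto b l b₀)
    (hbdd : IsBoundedUnder (· ≤ ·) l fun i => ‖b i‖) :
    Tendsto (fun i => ⟪a i, b i⟫) l (𝓝 ⟪a₀, b₀⟫) := by
  have hsmall : Tendsto (fun i => ⟪a i - a₀, b i⟫) l (𝓝 0) :=
    (tendsto_sub_nhds_zero_iff.mpr ha).op_zero_isBoundedUnder_le hbdd _ norm_inner_le_norm
  have hmain : Tendsto (fun i => ⟪a₀, b i⟫) l (𝓝 ⟪a₀, b₀⟫) := by
    simpa only [real_inner_comm a₀] using hb a₀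
  simpa [inner_sub_left] using hsmall.add hmain

/-- Banach–Alaoglu, transported to `H` by the Riesz isomorphism. -/
theorem exists_weakTendsto_of_norm_le [CompleteSpace H] (U : Ultrafilter ι) {x : ι → H} {R : ℝ}
    (hx : ∀ i, ‖x i‖ ≤ R) : ∃ w, WeakTendsto x U w := by
  let φ : ι → WeakDual ℝ H := fun i => StrongDual.toWeakDual (InnerProductSpace.toDual ℝ H (x i))
  have hball : ∀ i, φ i ∈ WeakDual.toStrongDual ⁻¹' Metric.closedBall 0 R := fun i => by
    simpa [φ] using hx i
  obtain ⟨ψ, -, hψ⟩ := (WeakDual.isCompact_closedBall (0 : StrongDual ℝ H) R).ultrafilter_le_nhds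
    (U.map φ) (le_principal_iff.2 (Filter.mem_map.2 (Filter.univ_mem' hball)))
  refine ⟨(InnerProductSpace.toDual ℝ H).symm (WeakDual.toStrongDual ψ), fun y => ?_⟩
  have : Tendsto (fun i => φ i y) U (𝓝 (ψ y)) :=
    (tendsto_iff_forall_eval_tendsto_topDualPairing.mp hψ) y
  simpa [φ, InnerProductSpace.toDual_symm_apply] using this

theorem WeakTendsto.tendsto [FiniteDimensional ℝ H] {x : ι → H} {l : Filter ι} {w : H}
    (hx : WeakTendsto x l w) : Tendsto x l (𝓝 w) := by
  let b := stdOrthonormalBasis ℝ H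
  have hcoord : ∀ i, Tendsto (fun k => ⟪b i, x k⟫ • b i) l (𝓝 (⟪b i, w⟫ • b i)) := fun i => by
    simpa only [real_inner_comm (b i)] using (hx (b i)).smul_const (b i)
  simpa only [b.sum_repr'] using tendsto_finsetSum Finset.univ fun i _ => hcoord i

end WeakConvergence

theorem tendsto_zero_of_succ_add_le {f g : ℕ → ℝ} (hf : ∀ k, 0 ≤ f k) (hg : ∀ k, 0 ≤ g k)
    (h : ∀ k, f (k + 1) + g k ≤ f k) : Tendsto g atTop (𝓝 0) := by
  refine (summable_of_sum_range_le (c := f 0) hg fun n => ?_).tendsto_atTop_zero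
  have htel : ∀ n, ∑ i ∈ Finset.range n, g i ≤ f 0 - f n := fun n => by
    induction n with
    | zero => simp
    | succ n ih => rw [Finset.sum_range_succ]; linarith [h n]
  linarith [htel n, hf n]

section Fejer

variable {H : Type*} [NormedAddCommGroup H]

def FejerMonotone (x : ℕ → H) (Z : Set H) : Prop :=
  ∀ z ∈ Z, Antitone fun k => ‖x k - z‖

theorem FejerMonotone.norm_le {x : ℕ → H} {Z : Set H} {z : H} (hx : FejerMonotone x Z)
    (hz : z ∈ Z) (k : ℕ) : ‖x k‖ ≤ ‖x 0 - z‖ + ‖z‖ :=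
  calc ‖x k‖ ≤ ‖x k - z‖ + ‖z‖ := norm_le_norm_sub_add _ _
    _ ≤ ‖x 0 - z‖ + ‖z‖ := by gcongr; exact hx z hz (Nat.zero_le k)

theorem FejerMonotone.tendsto_norm_sub {x : ℕ → H} {Z : Set H} {z : H} (hx : FejerMonotone x Z)
    (hz : z ∈ Z) : ∃ r, Tendsto (fun k => ‖x k - z‖) atTop (𝓝 r) :=
  ⟨_, tendsto_atTop_ciInf (hx z hz) ⟨0, by rintro _ ⟨k, rfl⟩; exact norm_nonneg _⟩⟩

theorem tendsto_zero_of_sq_norm_le {d : ℕ → H} {g : ℕ → ℝ} {a : ℝ} (ha : 0 < a)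
    (hg : Tendsto g atTop (𝓝 0)) (hd : ∀ k, a * ‖d k‖ ^ 2 ≤ g k) : Tendsto d atTop (𝓝 0) := by
  refine tendsto_zero_iff_norm_tendsto_zero.mpr (squeeze_zero (fun k => norm_nonneg _)
    (fun k => ?_) (by simpa using (hg.div_const a).sqrt))
  rw [← Real.sqrt_sq (norm_nonneg (d k))]
  exact Real.sqrt_le_sqrt (by rw [le_div_iff₀ ha]; linarith [hd k])

theorem tendsto_of_fejer_inequality {x xh : ℕ → H} {E : H → H} {Z : Set H} {z₀ : H}
    (hz₀ : z₀ ∈ Z) {a b : ℝ} (ha : 0 < a) (hb : 0 < b)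
    (hfejer : ∀ z ∈ Z, ∀ k,
      ‖x (k + 1) - z‖ ^ 2 + a * ‖x k - xh k‖ ^ 2 + b * ‖E (x k) - E z‖ ^ 2 ≤ ‖x k - z‖ ^ 2) :
    FejerMonotone x Z ∧ Tendsto (fun k => x k - xh k) atTop (𝓝 0) ∧
      Tendsto (fun k => E (x k)) atTop (𝓝 (E z₀)) := by
  have hg := tendsto_zero_of_succ_add_le (fun k => sq_nonneg ‖x k - z₀‖)
    (fun k => by positivity) fun k => (add_assoc _ _ _).symm.le.trans (hfejer z₀ hz₀ k)
  refine ⟨fun z hz => antitone_nat_of_succ_le fun k => ?_,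
    tendsto_zero_of_sq_norm_le ha hg fun k => le_add_of_nonneg_right (by positivity),
    tendsto_sub_nhds_zero_iff.mp (tendsto_zero_of_sq_norm_le hb hg fun k =>
      le_add_of_nonneg_left (by positivity))⟩
  refine (pow_le_pow_iff_left₀ (norm_nonneg _) (norm_nonneg _) two_ne_zero).mp ?_
  nlinarith [hfejer z hz k, sq_nonneg ‖x k - xh k‖, sq_nonneg ‖E (x k) - E z‖]

end Fejer

section Opial

variable {H : Type*} [NormedAddCommGroup H] [InnerProductSpace ℝ H]

theorem FejerMonotone.eq_of_weakTendsto {x : ℕ → H} {Z : Set H} (hx : FejerMonotone x Z)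
    {U₁ U₂ : Ultrafilter ℕ} (hU₁ : (U₁ : Filter ℕ) ≤ atTop) (hU₂ : (U₂ : Filter ℕ) ≤ atTop)
    {w₁ w₂ : H} (hw₁ : w₁ ∈ Z) (hw₂ : w₂ ∈ Z) (h₁ : WeakTendsto x U₁ w₁)
    (h₂ : WeakTendsto x U₂ w₂) : w₁ = w₂ := by
  obtain ⟨r₁, hr₁⟩ := hx.tendsto_norm_sub hw₁
  obtain ⟨r₂, hr₂⟩ := hx.tendsto_norm_sub hw₂
  -- by polarization `⟪x k, w₂ - w₁⟫` converges along `atTop`, so both limits agree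
  have hpol : ∀ k, ⟪x k, w₂ - w₁⟫ =
      (‖x k - w₁‖ ^ 2 - ‖x k - w₂‖ ^ 2 - ‖w₁‖ ^ 2 + ‖w₂‖ ^ 2) / 2 := fun k => by
    rw [norm_sub_sq_real, norm_sub_sq_real, inner_sub_right]; ring
  have hconv : Tendsto (fun k => ⟪x k, w₂ - w₁⟫) atTop
      (𝓝 ((r₁ ^ 2 - r₂ ^ 2 - ‖w₁‖ ^ 2 + ‖w₂‖ ^ 2) / 2)) := by
    simp_rw [hpol]
    exact ((((hr₁.pow 2).sub (hr₂.pow 2)).sub_const _).add_const _).div_const 2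
  have hval₁ := tendsto_nhds_unique (h₁ (w₂ - w₁)) (hconv.mono_left hU₁)
  have hval₂ := tendsto_nhds_unique (h₂ (w₂ - w₁)) (hconv.mono_left hU₂)
  have : ‖w₂ - w₁‖ ^ 2 = 0 := by
    rw [← real_inner_self_eq_norm_sq, inner_sub_left, hval₁, hval₂, sub_self]
  exact (sub_eq_zero.mp (norm_eq_zero.mp (pow_eq_zero_iff two_ne_zero |>.mp this))).symm

theorem FejerMonotone.exists_weakConvergesTo [CompleteSpace H] {x : ℕ → H} {Z : Set H}
    (hx : FejerMonotone x Z) (hZ : Z.Nonempty)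
    (hcluster : ∀ U : Ultrafilter ℕ, (U : Filter ℕ) ≤ atTop → ∀ w, WeakTendsto x U w → w ∈ Z) :
    ∃ w ∈ Z, WeakConvergesTo x w := by
  obtain ⟨z, hz⟩ := hZ
  have hlim : ∀ U : Ultrafilter ℕ, ∃ w, WeakTendsto x U w := fun U =>
    exists_weakTendsto_of_norm_le U (hx.norm_le hz)
  obtain ⟨w, hw⟩ := hlim (Ultrafilter.of atTop)
  have hwZ := hcluster _ (Ultrafilter.of_le _) w hw
  refine ⟨w, hwZ, fun y => (tendsto_iff_ultrafilter _ _ _).mpr fun U hU => ?_⟩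
  obtain ⟨w', hw'⟩ := hlim U
  rw [hx.eq_of_weakTendsto (Ultrafilter.of_le _) hU hwZ (hcluster U hU w' hw') hw hw']
  exact hw' y

end Opial

theorem mem_image_add_iff {H : Type*} [AddGroup H] {B : H → Set H} {D : H → H} {z y : H} :
    y ∈ (fun u => u + D z) '' B z ↔ y - D z ∈ B z :=
  ⟨by rintro ⟨b, hb, rfl⟩; simpa using hb, fun h => ⟨_, h, sub_add_cancel _ _⟩⟩

section Operators

variable {H ι : Type*} [NormedAddCommGroup H] [InnerProductSpace ℝ H]

/-- `(1 / β)`-cocoercivity, written without dividing by `β`; for `β = 0` it forces `E` to be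
constant. -/
def IsCocoerciveWith (β : ℝ) (E : H → H) : Prop :=
  ∀ x y, ‖E x - E y‖ ^ 2 ≤ β * ⟪E x - E y, x - y⟫

theorem isCocoerciveWith_of_cases {β : ℝ} {E : H → H} (hβ : 0 ≤ β)
    (h₀ : β = 0 → ∀ x y, E x = E y)
    (hpos : 0 < β → ∀ x y, (1 / β) * ‖E x - E y‖ ^ 2 ≤ ⟪E x - E y, x - y⟫) :
    IsCocoerciveWith β E := fun x y => by
  rcases hβ.eq_or_lt with rfl | hβ
  · simp [h₀ rfl x y]
  · calc ‖E x - E y‖ ^ 2 = β * ((1 / β) * ‖E x - E y‖ ^ 2) := by field_simp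
      _ ≤ β * ⟪E x - E y, x - y⟫ := by gcongr; exact hpos hβ x y

theorem IsCocoerciveWith.norm_sub_le {β : ℝ} {E : H → H} (hE : IsCocoerciveWith β E)
    (hβ : 0 ≤ β) (x y : H) : ‖E x - E y‖ ≤ β * ‖x - y‖ := by
  have h := (hE x y).trans (mul_le_mul_of_nonneg_left (real_inner_le_norm _ _) hβ)
  nlinarith [norm_nonneg (E x - E y), mul_nonneg hβ (norm_nonneg (x - y))]

theorem inner_apply_self_eq_zero_of_adjoint_eq_neg [CompleteSpace H] {K : H →L[ℝ] H}
    (hK : K.adjoint = -K) (h : H) : ⟪K h, h⟫ = 0 := by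
  have := K.adjoint_inner_right h h
  rw [hK, neg_apply, inner_neg_right, real_inner_comm] at this
  linarith

/-- No maximality of `M + E + K` is needed: `K` is linear and skew, hence weakly continuous, and
`E (y i)` converges strongly. -/
theorem IsMaxMonotoneOp.neg_mem_of_weakTendsto {M : H → Set H} (hM : IsMaxMonotoneOp M)
    {β : ℝ} {E : H → H} (hE : IsCocoerciveWith β E) {K : H →L[ℝ] H} (hK : ∀ h, ⟪K h, h⟫ = 0)
    {l : Filter ι} [l.NeBot] {y v : ι → H} {w e : H} (hy : WeakTendsto y l w)
    (hybdd : IsBoundedUnder (· ≤ ·) l fun i => ‖y i‖) (hv : Tendsto v l (𝓝 0))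
    (hEy : Tendsto (fun i => E (y i)) l (𝓝 e))
    (hmem : ∀ i, v i - (E (y i) + K (y i)) ∈ M (y i)) :
    -(E w + K w) ∈ M w := by
  have hK' : ∀ a b, ⟪K a - K b, a - b⟫ = 0 := fun a b => by rw [← map_sub]; exact hK _
  have hbdd : ∀ p, IsBoundedUnder (· ≤ ·) l fun i => ‖y i - p‖ := fun p =>
    (isBoundedUnder_le_add hybdd isBoundedUnder_const).mono_le
      (Eventually.of_forall fun i => norm_sub_le _ _)
  have he : e = E w := by
    have hlim := le_of_tendsto_of_tendsto' ((hEy.sub_const (E w)).norm.pow 2)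
      (((hEy.sub_const (E w)).inner_weakTendsto (hy.sub_const w) (hbdd w)).const_mul β)
      fun i => hE (y i) w
    rw [sub_self, inner_zero_right, mul_zero] at hlim
    exact sub_eq_zero.mp (norm_eq_zero.mp (pow_eq_zero_iff two_ne_zero |>.mp
      (le_antisymm hlim (sq_nonneg _))))
  refine hM.2 _ _ fun p q hq => ?_
  -- by skewness, `K (y i)` may be replaced by `K p` against `y i - p`
  have hterm : ∀ i, ⟪v i - (E (y i) + K (y i)) - q, y i - p⟫ =
      ⟪v i - E (y i) - K p - q, y i - p⟫ := fun i => by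
    rw [show v i - (E (y i) + K (y i)) - q = (v i - E (y i) - K p - q) - (K (y i) - K p) by abel,
      inner_sub_left, hK', sub_zero]
  have hlim : Tendsto (fun i => ⟪v i - E (y i) - K p - q, y i - p⟫) l
      (𝓝 ⟪0 - e - K p - q, w - p⟫) :=
    (((hv.sub hEy).sub_const _).sub_const _).inner_weakTendsto (hy.sub_const p) (hbdd p)
  have hval : ⟪0 - e - K p - q, w - p⟫ = ⟪-(E w + K w) - q, w - p⟫ := by
    rw [he, show 0 - E w - K p - q = (-(E w + K w) - q) + (K w - K p) by abel,
      inner_add_left, hK', add_zero]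
  rw [← hval]
  exact ge_of_tendsto' hlim fun i => hterm i ▸ hM.1 (hmem i) hq

end Operators

section Step

variable {H : Type*} [NormedAddCommGroup H] [InnerProductSpace ℝ H]

theorem step_size_bounds {β L γ ε : ℝ} (hβ : 0 ≤ β) (hγ : 0 ≤ γ) (hε : 0 ≤ ε)
    (h : γ * (β + √(β ^ 2 + 16 * L ^ 2)) ≤ 4 - ε) :
    γ * β / 2 + γ ^ 2 * L ^ 2 ≤ 1 - ε / 4 ∧ γ * β ≤ 2 ∧ γ * L ≤ 1 := by
  set S := √(β ^ 2 + 16 * L ^ 2)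
  have hS : S ^ 2 = β ^ 2 + 16 * L ^ 2 := Real.sq_sqrt (by positivity)
  have hSβ : β ≤ S := Real.le_sqrt_of_sq_le (by nlinarith)
  have hSL : 4 * L ≤ S := Real.le_sqrt_of_sq_le (by nlinarith)
  have h2γβ : 2 * (γ * β) ≤ 4 - ε := by nlinarith [mul_le_mul_of_nonneg_left hSβ hγ]
  refine ⟨?_, by linarith, by nlinarith [mul_le_mul_of_nonneg_left hSL hγ, mul_nonneg hγ hβ]⟩
  have hsq : (γ * S) ^ 2 ≤ (4 - ε - γ * β) ^ 2 :=
    pow_le_pow_left₀ (by positivity) (by linarith) 2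
  have hexp : (γ * S) ^ 2 = γ ^ 2 * β ^ 2 + 16 * (γ ^ 2 * L ^ 2) := by rw [mul_pow, hS]; ring
  nlinarith [mul_nonneg hε (by linarith : 0 ≤ 4 - ε - 2 * (γ * β))]

theorem cocoercive_cross_le {e d p : H} {β γ ε : ℝ} (hβ : 0 ≤ β) (hε : 0 < ε) (hε1 : ε ≤ 1)
    (hγ : ε ≤ γ) (hγβ : γ * β ≤ 2) (hco : ‖e‖ ^ 2 ≤ β * ⟪e, p⟫) :
    2 * γ * ⟪e, d⟫ - 2 * γ * ⟪e, p⟫ ≤ (γ * β / 2 + ε / 8) * ‖d‖ ^ 2 - ε ^ 3 / 16 * ‖e‖ ^ 2 := by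
  rcases hβ.eq_or_lt with rfl | hβ
  · obtain rfl : e = 0 := by simpa using hco
    simp only [inner_zero_left, norm_zero]; nlinarith [sq_nonneg ‖d‖]
  set X := ‖e‖
  set Y := ‖d‖
  -- completing the square: `2 γ X Y - (2 γ / β) X² = (γ β / 2) Y² - (γ / 2β) T²`
  set T := β * Y - 2 * X
  have hγ0 : 0 < γ := hε.trans_le hγ
  have hd : ⟪e, d⟫ ≤ X * Y := real_inner_le_norm e d
  have hεβ : ε * β ≤ 2 := by nlinarith
  have hX : X ^ 2 ≤ (β ^ 2 * Y ^ 2 + T ^ 2) / 2 := by nlinarith [sq_nonneg (β * Y + T)]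
  have hc₁ : ε ^ 3 / 16 * β ≤ γ := by nlinarith [mul_pos hε hε]
  have hc₂ : ε ^ 3 / 16 * β ^ 2 ≤ ε / 4 := by
    have : (ε * β) ^ 2 ≤ 4 := by nlinarith [mul_pos hε hβ]
    nlinarith [mul_le_mul_of_nonneg_left this hε.le]
  suffices β * (2 * γ * ⟪e, d⟫ - 2 * γ * ⟪e, p⟫) ≤
      β * ((γ * β / 2 + ε / 8) * Y ^ 2 - ε ^ 3 / 16 * X ^ 2) from le_of_mul_le_mul_left this hβ
  nlinarith [mul_le_mul_of_nonneg_left hd (by positivity : 0 ≤ 2 * γ * β),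
    mul_le_mul_of_nonneg_left hX (by positivity : 0 ≤ ε ^ 3 / 16 * β), sq_nonneg T,
    mul_le_mul_of_nonneg_right hc₁ (sq_nonneg T),
    mul_le_mul_of_nonneg_right hc₂ (mul_nonneg hβ.le (sq_nonneg Y))]

theorem norm_map_add_clm_sub_le {D : H → H} {L : ℝ} (hD : ∀ x y, ‖D x - D y‖ ≤ L * ‖x - y‖)
    (K : H →L[ℝ] H) (x y : H) : ‖(D x + K x) - (D y + K y)‖ ≤ (L + ‖K‖) * ‖x - y‖ :=
  calc ‖(D x + K x) - (D y + K y)‖ = ‖(D x - D y) + K (x - y)‖ := by rw [map_sub]; abel_nf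
    _ ≤ L * ‖x - y‖ + ‖K‖ * ‖x - y‖ := norm_add_le_of_le (hD x y) (K.le_opNorm _)
    _ = (L + ‖K‖) * ‖x - y‖ := by ring

variable {B : H → Set H} {D E : H → H} {K : H →L[ℝ] H} {L β γ ε : ℝ} {a ah u a' z : H}

theorem fejer_inequality (hBD : IsMonotoneOp fun x => (fun u => u + D x) '' B x)
    (hD : ∀ x y, ‖D x - D y‖ ≤ L * ‖x - y‖) (hE : IsCocoerciveWith β E) (hβ : 0 ≤ β)
    (hK : ∀ h, ⟪K h, h⟫ = 0) (hε : 0 < ε) (hε1 : ε ≤ 1) (hγ : ε ≤ γ)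
    (hstep : γ * β / 2 + γ ^ 2 * (L + ‖K‖) ^ 2 ≤ 1 - ε / 4) (hγβ : γ * β ≤ 2)
    (hu : u ∈ B ah) (hah : a - γ • (D a + K a + E a) - ah = γ • u)
    (ha' : a' = ah - γ • ((D ah + K ah) - (D a + K a))) (hz : -(D z + E z + K z) ∈ B z) :
    ‖a' - z‖ ^ 2 + ε / 8 * ‖a - ah‖ ^ 2 + ε ^ 3 / 16 * ‖E a - E z‖ ^ 2 ≤ ‖a - z‖ ^ 2 := by
  set d := a - ah
  set w := ah - z
  set s := (D ah + K ah) - (D a + K a)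
  set e := E a - E z
  have hγ0 : 0 < γ := hε.trans_le hγ
  have hmono : 0 ≤ ⟪d, w⟫ + γ * ⟪s, w⟫ - γ * ⟪e, w⟫ := by
    have h : 0 ≤ ⟪(u + D ah) - (-(D z + E z + K z) + D z), w⟫ := hBD ⟨u, hu, rfl⟩ ⟨_, hz, rfl⟩
    have hγu : γ • ((u + D ah) - (-(D z + E z + K z) + D z)) = d + γ • s - γ • e - γ • K w := by
      rw [smul_sub, smul_add, ← hah]; simp only [d, s, e, w, map_sub]; module
    have := mul_nonneg hγ0.le h
    rw [← real_inner_smul_left, hγu] at this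
    simpa only [inner_sub_left, inner_add_left, real_inner_smul_left, hK, mul_zero, sub_zero]
      using this
  have hnorm : ‖a' - z‖ ^ 2 =
      ‖a - z‖ ^ 2 - ‖d‖ ^ 2 - 2 * ⟪d, w⟫ - 2 * γ * ⟪s, w⟫ + γ ^ 2 * ‖s‖ ^ 2 := by
    rw [show a' - z = w - γ • s by rw [ha']; simp only [w]; abel,
      show a - z = w + d by simp only [w, d]; abel,
      norm_sub_sq_real, norm_add_sq_real, real_inner_smul_right, norm_smul, Real.norm_eq_abs,
      abs_of_pos hγ0, real_inner_comm w d, real_inner_comm w s]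
    ring
  have hs : γ ^ 2 * ‖s‖ ^ 2 ≤ γ ^ 2 * ((L + ‖K‖) * ‖d‖) ^ 2 := by
    have := norm_map_add_clm_sub_le hD K ah a
    rw [norm_sub_rev ah a] at this
    gcongr
  have hcross := cocoercive_cross_le (d := d) hβ hε hε1 hγ hγβ (hE a z)
  have hew : ⟪e, w⟫ = ⟪e, a - z⟫ - ⟪e, d⟫ := by
    rw [show w = (a - z) - d by simp only [w, d]; abel, inner_sub_right]
  nlinarith [mul_le_mul_of_nonneg_right hstep (sq_nonneg ‖d‖)]

theorem norm_step_sub_le (hD : ∀ x y, ‖D x - D y‖ ≤ L * ‖x - y‖) (hγ : 0 ≤ γ)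
    (hγL : γ * (L + ‖K‖) ≤ 1) (ha' : a' = ah - γ • ((D ah + K ah) - (D a + K a))) :
    ‖a' - a‖ ≤ 2 * ‖a - ah‖ := by
  have hs := norm_map_add_clm_sub_le hD K ah a
  rw [norm_sub_rev ah a] at hs
  calc ‖a' - a‖ = ‖-(a - ah) - γ • ((D ah + K ah) - (D a + K a))‖ := by rw [ha']; abel_nf
    _ ≤ ‖a - ah‖ + γ * ((L + ‖K‖) * ‖a - ah‖) := by
      refine (norm_sub_le _ _).trans ?_
      rw [norm_neg, norm_smul, Real.norm_of_nonneg hγ]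
      gcongr
    _ ≤ 2 * ‖a - ah‖ := by nlinarith [norm_nonneg (a - ah)]

theorem norm_residual_le (hD : ∀ x y, ‖D x - D y‖ ≤ L * ‖x - y‖) (hE : IsCocoerciveWith β E)
    (hβ : 0 ≤ β) (hε : 0 < ε) (hγ : ε ≤ γ) (hγL : γ * (L + ‖K‖) ≤ 1)
    (hah : a - γ • (D a + K a + E a) - ah = γ • u)
    (ha' : a' = ah - γ • ((D ah + K ah) - (D a + K a))) :
    ‖u + (D ah + E ah + K ah)‖ ≤ (2 / ε + β) * ‖a - ah‖ := by
  have hγ0 : 0 < γ := hε.trans_le hγ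
  have hres : u + (D ah + E ah + K ah) = γ⁻¹ • (a - a') + (E ah - E a) := by
    rw [← inv_smul_smul₀ hγ0.ne' (u + _), smul_add, ← hah, ha',
      show a - γ • (D a + K a + E a) - ah + γ • (D ah + E ah + K ah) =
        (a - (ah - γ • ((D ah + K ah) - (D a + K a)))) + γ • (E ah - E a) by module,
      smul_add, inv_smul_smul₀ hγ0.ne']
  have hinv : γ⁻¹ ≤ 1 / ε := by rw [one_div]; exact inv_anti₀ hε hγ
  rw [hres]
  calc ‖γ⁻¹ • (a - a') + (E ah - E a)‖ ≤ γ⁻¹ * ‖a' - a‖ + β * ‖a - ah‖ := by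
        refine norm_add_le_of_le ?_ ?_
        · rw [norm_smul, Real.norm_of_nonneg (inv_nonneg.mpr hγ0.le), norm_sub_rev]
        · rw [norm_sub_rev a]; exact hE.norm_sub_le hβ ah a
    _ ≤ 1 / ε * (2 * ‖a - ah‖) + β * ‖a - ah‖ := by
        gcongr
        exact norm_step_sub_le hD hγ0.le hγL ha'
    _ = (2 / ε + β) * ‖a - ah‖ := by ring

end Step

section WeakLimit

variable {H : Type*} [NormedAddCommGroup H] [InnerProductSpace ℝ H] [CompleteSpace H]

theorem exists_weakConvergesTo_of_fejer {M : H → Set H} (hM : IsMaxMonotoneOp M)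
    {β : ℝ} {E : H → H} (hE : IsCocoerciveWith β E) (hβ : 0 ≤ β) {K : H →L[ℝ] H}
    (hK : ∀ h, ⟪K h, h⟫ = 0) {Z : Set H} (hZ : ∀ z, z ∈ Z ↔ -(E z + K z) ∈ M z)
    (hZne : Z.Nonempty) {x xh v : ℕ → H} {e : H} {C : ℝ} (hx : FejerMonotone x Z)
    (hd : Tendsto (fun k => x k - xh k) atTop (𝓝 0))
    (hEx : Tendsto (fun k => E (x k)) atTop (𝓝 e)) (hv : ∀ k, ‖v k‖ ≤ C * ‖x k - xh k‖)
    (hmem : ∀ k, v k - (E (xh k) + K (xh k)) ∈ M (xh k)) :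
    ∃ w ∈ Z, WeakConvergesTo x w := by
  obtain ⟨z, hz⟩ := hZne
  have hdn := tendsto_zero_iff_norm_tendsto_zero.mp hd
  have hbdd : IsBoundedUnder (· ≤ ·) atTop fun k => ‖xh k‖ :=
    (isBoundedUnder_le_add (isBoundedUnder_of ⟨_, hx.norm_le hz⟩) hdn.isBoundedUnder_le).mono_le
      (Eventually.of_forall fun k => by simpa using norm_le_norm_add_norm_sub (x k) (xh k))
  have hv0 : Tendsto v atTop (𝓝 0) := squeeze_zero_norm hv (by simpa using hdn.const_mul C)
  have hEd : Tendsto (fun k => E (x k) - E (xh k)) atTop (𝓝 0) :=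
    squeeze_zero_norm (fun k => hE.norm_sub_le hβ _ _) (by simpa using hdn.const_mul β)
  have hExh : Tendsto (fun k => E (xh k)) atTop (𝓝 e) := by simpa using hEx.sub hEd
  refine hx.exists_weakConvergesTo ⟨z, hz⟩ fun U hU w hw => (hZ w).mpr ?_
  exact hM.neg_mem_of_weakTendsto hE hK (hw.of_tendsto_sub (hd.mono_left hU)) (hbdd.mono hU)
    (hv0.mono_left hU) (hExh.mono_left hU) hmem

end WeakLimit

section LinearRate

theorem sq_infDist_add_le_of_forall {X : Type*} [PseudoMetricSpace X] {Z : Set X} {x x' : X}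
    {r : ℝ} (hZ : Z.Nonempty) (hr : 0 ≤ r) (h : ∀ z ∈ Z, dist x' z ^ 2 + r ≤ dist x z ^ 2) :
    Metric.infDist x' Z ^ 2 + r ≤ Metric.infDist x Z ^ 2 := by
  have hle : √(Metric.infDist x' Z ^ 2 + r) ≤ Metric.infDist x Z := by
    refine (Metric.le_infDist hZ).mpr fun z hz => Real.sqrt_le_iff.mpr ⟨dist_nonneg, ?_⟩
    refine le_trans ?_ (h z hz)
    gcongr
    · exact Metric.infDist_nonneg
    · exact Metric.infDist_le_dist_of_mem hz
  calc Metric.infDist x' Z ^ 2 + r = √(Metric.infDist x' Z ^ 2 + r) ^ 2 :=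
        (Real.sq_sqrt (by positivity)).symm
    _ ≤ Metric.infDist x Z ^ 2 := by gcongr

theorem dist_le_geometric_of_tendsto_of_ge {X : Type*} [PseudoMetricSpace X] {x : ℕ → X}
    {xlim : X} {A c : ℝ} {K₀ : ℕ} (hc0 : 0 < c) (hc1 : c < 1) (hx : Tendsto x atTop (𝓝 xlim))
    (hstep : ∀ n, dist (x (K₀ + n)) (x (K₀ + n + 1)) ≤ A * c ^ n) :
    ∀ k ≥ K₀, dist (x k) xlim ≤ A / (1 - c) / c ^ K₀ * c ^ k := by
  intro k hk
  obtain ⟨n, rfl⟩ := Nat.exists_eq_add_of_le hk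
  calc dist (x (K₀ + n)) xlim ≤ A * c ^ n / (1 - c) :=
        dist_le_of_le_geometric_of_tendsto c A hc1 hstep
          (hx.comp (tendsto_add_atTop_nat K₀ |>.congr fun n => Nat.add_comm n K₀)) n
    _ = A / (1 - c) / c ^ K₀ * c ^ (K₀ + n) := by rw [pow_add]; field_simp

variable {H : Type*} [NormedAddCommGroup H]

/-- An error bound `infDist (x k) Z ≤ C * r k` turns the Fejér inequality into a contraction of
`infDist · Z` by the factor `√(1 - a / C²)`. -/
theorem exists_linear_rate_of_fejer {x : ℕ → H} {Z : Set H} {xlim : H} {r : ℕ → ℝ} {a C M : ℝ}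
    {K₀ : ℕ} (hZ : Z.Nonempty) (hx : Tendsto x atTop (𝓝 xlim)) (ha : 0 < a) (haC : a < C ^ 2)
    (hM : 0 ≤ M) (hfejer : ∀ z ∈ Z, ∀ k, ‖x (k + 1) - z‖ ^ 2 + a * r k ^ 2 ≤ ‖x k - z‖ ^ 2)
    (hmove : ∀ k, ‖x (k + 1) - x k‖ ≤ M * r k)
    (herr : ∀ k ≥ K₀, Metric.infDist (x k) Z ≤ C * r k) :
    ∃ c R : ℝ, 0 ≤ c ∧ c < 1 ∧ 0 ≤ R ∧ ∀ k ≥ K₀,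
      Metric.infDist (x (k + 1)) Z ≤ c * Metric.infDist (x k) Z ∧ ‖x k - xlim‖ ≤ R * c ^ k := by
  set δ : ℕ → ℝ := fun k => Metric.infDist (x k) Z
  have hδ0 : ∀ k, 0 ≤ δ k := fun k => Metric.infDist_nonneg
  have hC : 0 < C ^ 2 := ha.trans haC
  set c := √(1 - a / C ^ 2)
  have hc2 : c ^ 2 = 1 - a / C ^ 2 :=
    Real.sq_sqrt (by rw [sub_nonneg, div_le_one hC]; exact haC.le)
  have hc0 : 0 < c := Real.sqrt_pos.mpr (by rw [sub_pos, div_lt_one hC]; exact haC)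
  have hc1 : c < 1 := by nlinarith [div_pos ha hC]
  have hsq : ∀ k, δ (k + 1) ^ 2 + a * r k ^ 2 ≤ δ k ^ 2 := fun k =>
    sq_infDist_add_le_of_forall hZ (by positivity) fun z hz => by
      simpa only [dist_eq_norm] using hfejer z hz k
  have hr : ∀ k, √a * r k ≤ δ k := fun k =>
    (abs_le_of_sq_le_sq' (by rw [mul_pow, Real.sq_sqrt ha.le]; nlinarith [hsq k]) (hδ0 k)).2
  have hcontr : ∀ k ≥ K₀, δ (k + 1) ≤ c * δ k := fun k hk => by
    have hCr : a / C ^ 2 * δ k ^ 2 ≤ a * r k ^ 2 := by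
      have := mul_le_mul_of_nonneg_left (pow_le_pow_left₀ (hδ0 k) (herr k hk) 2)
        (div_pos ha hC).le
      rwa [mul_pow, ← mul_assoc, div_mul_cancel₀ a hC.ne'] at this
    have : δ (k + 1) ^ 2 ≤ (c * δ k) ^ 2 := by rw [mul_pow, hc2]; nlinarith [hsq k]
    exact (abs_le_of_sq_le_sq' this (mul_nonneg hc0.le (hδ0 k))).2
  have hgeom : ∀ n, δ (K₀ + n) ≤ c ^ n * δ K₀ := fun n =>
    le_geom (u := fun n => δ (K₀ + n)) hc0.le n fun k _ => hcontr (K₀ + k) (Nat.le_add_right _ _)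
  have hstep : ∀ n, dist (x (K₀ + n)) (x (K₀ + n + 1)) ≤ M / √a * δ K₀ * c ^ n := fun n =>
    calc dist (x (K₀ + n)) (x (K₀ + n + 1)) ≤ M * r (K₀ + n) := by
          rw [dist_comm, dist_eq_norm]; exact hmove _
      _ ≤ M * (δ (K₀ + n) / √a) := by
        gcongr; rw [le_div_iff₀ (Real.sqrt_pos.mpr ha), mul_comm]; exact hr _
      _ ≤ M * (c ^ n * δ K₀ / √a) := by gcongr; exact hgeom n
      _ = M / √a * δ K₀ * c ^ n := by ring
  have hR : 0 ≤ M / √a * δ K₀ / (1 - c) / c ^ K₀ := by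
    have := hδ0 K₀; have := sub_pos.mpr hc1; positivity
  refine ⟨c, _, hc0.le, hc1, hR, fun k hk => ⟨hcontr k hk, ?_⟩⟩
  simpa only [dist_eq_norm] using dist_le_geometric_of_tendsto_of_ge hc0 hc1 hx hstep k hk

theorem exists_infDist_le_of_errorBound {x xh v : ℕ → H} {Z U : Set H} {xbar : H} {C κ ν : ℝ}
    (hU : IsOpen U) (hxbar : xbar ∈ U) (hν : 0 < ν) (hκ : 0 ≤ κ) (hx : Tendsto x atTop (𝓝 xbar))
    (hd : Tendsto (fun k => x k - xh k) atTop (𝓝 0)) (hv : ∀ k, ‖v k‖ ≤ C * ‖x k - xh k‖)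
    (herr : ∀ k, xh k ∈ U → ‖v k‖ < ν → Metric.infDist (xh k) Z ≤ κ * ‖v k‖) :
    ∃ K₀, ∀ k ≥ K₀, Metric.infDist (x k) Z ≤ (1 + κ * C) * ‖x k - xh k‖ := by
  have hxh : Tendsto xh atTop (𝓝 xbar) := by simpa using hx.sub hd
  have hsmall : ∀ᶠ k in atTop, C * ‖x k - xh k‖ < ν := by
    simpa using ((tendsto_zero_iff_norm_tendsto_zero.mp hd).const_mul C).eventually_lt_const
      (by simpa using hν)
  obtain ⟨K₀, hK₀⟩ := ((hxh.eventually (hU.mem_nhds hxbar)).and hsmall).exists_forall_of_atTop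
  refine ⟨K₀, fun k hk => ?_⟩
  obtain ⟨hUk, hνk⟩ := hK₀ k hk
  calc Metric.infDist (x k) Z ≤ Metric.infDist (xh k) Z + ‖x k - xh k‖ := by
        rw [← dist_eq_norm]; exact Metric.infDist_le_infDist_add_dist
    _ ≤ κ * (C * ‖x k - xh k‖) + ‖x k - xh k‖ := by
        gcongr
        exact (herr k hUk ((hv k).trans_lt hνk)).trans (by gcongr; exact hv k)
    _ = (1 + κ * C) * ‖x k - xh k‖ := by ring

end LinearRate

/-- convergence and local linear convergence of four-operator splitting
with conservative step-length (Algorithm 6), generalizing FBF and FBHF. -/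
theorem four_operator_splitting_conservative_convergence
    {H : Type*} [NormedAddCommGroup H] [InnerProductSpace ℝ H] [CompleteSpace H]
    -- Assumption 4
    (B : H → Set H)
    (D : H → H) (L_D : ℝ) (hD : ∀ x y : H, ‖D x - D y‖ ≤ L_D * ‖x - y‖)
    (βE : ℝ) (hβE : 0 ≤ βE)
    (E : H → H)
    (hE0 : βE = 0 → ∀ x y : H, E x = E y)
    (hEpos : 0 < βE → ∀ x y : H,
      (1 / βE) * ‖E x - E y‖ ^ 2 ≤ inner ℝ (E x - E y) (x - y))
    (K : H →L[ℝ] H) (hK : ContinuousLinearMap.adjoint K = -K)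
    (hBD : IsMaxMonotoneOp (fun x => (fun u => u + D x) '' B x))
    (Z : Set H) (hZ : Z = {x : H | -(D x + E x + K x) ∈ B x}) (hzer : Z.Nonempty)
    -- step-sizes
    (γ : ℕ → ℝ) (ε : ℝ) (hε : 0 < ε ∧ ε < 1)
    (hγ : ∀ k, ε ≤ γ k ∧ γ k ≤ 1 / ε)
    (hγUB : ∀ k,
      γ k * (βE + Real.sqrt (βE ^ 2 + 16 * (L_D + ‖K‖) ^ 2)) ≤ 4 - ε)
    -- the algorithm
    (x xh : ℕ → H)
    (hxh : ∀ k, ∃ u ∈ B (xh k),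
      x k - γ k • (D (x k) + K (x k) + E (x k)) - xh k = γ k • u)
    (hupd : ∀ k, x (k + 1) =
      xh k - γ k • ((D (xh k) + K (xh k)) - (D (x k) + K (x k)))) :
    (∃ xbar ∈ Z, WeakConvergesTo x xbar) ∧
    (FiniteDimensional ℝ H →
      (∃ κ ≥ (0:ℝ), ∃ ν > (0:ℝ), ∃ U : Set H, IsOpen U ∧ Z ⊆ U ∧
        ∀ xx v : H, xx ∈ U → v - D xx - E xx - K xx ∈ B xx → ‖v‖ < ν →
          Metric.infDist xx Z ≤ κ * ‖v‖) →
      ∃ (K₀ : ℕ) (c R : ℝ), 0 ≤ c ∧ c < 1 ∧ 0 ≤ R ∧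
        ∃ xbar ∈ Z, ∀ k ≥ K₀,
          Metric.infDist (x (k + 1)) Z ≤ c * Metric.infDist (x k) Z ∧
          ‖x k - xbar‖ ≤ R * c ^ k) := by
  obtain ⟨hε0, hε1⟩ := hε
  choose u hu hstep using hxh
  set v := fun k => u k + (D (xh k) + E (xh k) + K (xh k))
  have hK' := inner_apply_self_eq_zero_of_adjoint_eq_neg hK
  have hE' := isCocoerciveWith_of_cases hβE hE0 hEpos
  have hZ' : ∀ z, z ∈ Z ↔ -(E z + K z) ∈ (fun x => (fun u => u + D x) '' B x) z := fun z => by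
    rw [hZ, mem_image_add_iff, show -(E z + K z) - D z = -(D z + E z + K z) by abel]; rfl
  have hγ0 : ∀ k, 0 < γ k := fun k => hε0.trans_le (hγ k).1
  have hsize := fun k => step_size_bounds hβE (hγ0 k).le hε0.le (hγUB k)
  have hfejer : ∀ z ∈ Z, ∀ k, ‖x (k + 1) - z‖ ^ 2 + ε / 8 * ‖x k - xh k‖ ^ 2 +
      ε ^ 3 / 16 * ‖E (x k) - E z‖ ^ 2 ≤ ‖x k - z‖ ^ 2 := fun z hz k =>
    fejer_inequality hBD.1 hD hE' hβE hK' hε0 hε1.le (hγ k).1 (hsize k).1 (hsize k).2.1 (hu k)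
      (hstep k) (hupd k) (by rw [hZ] at hz; exact hz)
  have hv : ∀ k, ‖v k‖ ≤ (2 / ε + βE) * ‖x k - xh k‖ := fun k =>
    norm_residual_le hD hE' hβE hε0 (hγ k).1 (hsize k).2.2 (hstep k) (hupd k)
  obtain ⟨z₀, hz₀⟩ := hzer
  obtain ⟨hmono, hd, hEx⟩ := tendsto_of_fejer_inequality hz₀ (by positivity) (by positivity) hfejer
  obtain ⟨xbar, hxbar, hweak⟩ := exists_weakConvergesTo_of_fejer hBD hE' hβE hK' hZ' ⟨z₀, hz₀⟩
    hmono hd hEx hv fun k => ⟨u k, hu k, by simp only [v]; abel⟩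
  refine ⟨⟨xbar, hxbar, hweak⟩, fun _ ⟨κ, hκ, ν, hν, U, hU, hZU, herr⟩ => ?_⟩
  have hx : Tendsto x atTop (𝓝 xbar) := WeakTendsto.tendsto hweak
  obtain ⟨K₀, hK₀⟩ := exists_infDist_le_of_errorBound hU (hZU hxbar) hν hκ hx hd hv
    fun k hUk hνk => herr _ _ hUk (by convert hu k using 1; simp only [v]; abel) hνk
  obtain ⟨c, R, hc0, hc1, hR, hrate⟩ := exists_linear_rate_of_fejer ⟨z₀, hz₀⟩ hx (by positivity)
    (by nlinarith [mul_nonneg hκ (by positivity : (0:ℝ) ≤ 2 / ε + βE)]) zero_le_two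
    (fun z hz k => (le_add_of_nonneg_right (by positivity)).trans (hfejer z hz k))
    (fun k => norm_step_sub_le hD (hγ0 k).le (hsize k).2.2 (hupd k)) hK₀
  exact ⟨K₀, c, R, hc0, hc1, hR, xbar, hxbar, hrate⟩
end
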